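/- arXiv:1811.04872 — 7 statements merged into one kernel-verified Lean document; each statement's English description precedes it below -/
import Mathlib

section
/- Let G be a path on vertices v_1,…,v_m, let N be a finite set of agents with |N| ≥ 2, each having an additive valuation with nonnegative item values, and let i ∈ N be an agent with u_i({v_1}) > 0. Let k be the largest index with u_i({v_k}) > 0 and set V_i = {v_1,…,v_k}. If π is a connected allocation of G among N with π(i) = V_i whose restriction to N∖{i} is a Pareto-optimal connected allocation of the subpath on {v_{k+1},…,v_m} among the agents N∖{i}, then π is a Pareto-optimal connected allocation of G among N. -/
/-!
Agent `i` already holds every item she values positively, so in a Pareto-improvement `π'` she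
must still hold all of them; being connected and containing the first vertex, `π' i` is a prefix
`{v ≤ t}` with `k ≤ t`. Handing the gap `(k, t]` to the agent who owns the vertex after `t` (any
other agent if `t` is the last vertex) turns `π'` on the other agents into a connected allocation
of `{v > k}` that weakly improves all of them, and strictly improves the agent who gained strictly
in `π'`, since that agent cannot be `i`. This contradicts Pareto-optimality of the restriction.
-/

open Finset

/-- A finite set of items is *connected* in the item graph `G` if the induced
subgraph is preconnected (the empty set counts as connected). -/
def ConnSet {V : Type*} (G : SimpleGraph V) (X : Finset V) : Prop :=
  (G.induce (X : Set V)).Preconnected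

/-- `π` is a connected allocation of the items in `R` among the agents in `N`. -/
def IsConnAllocOn {V N : Type*} [DecidableEq V] (G : SimpleGraph V)
    (R : Finset V) (π : N → Finset V) : Prop :=
  (∀ i, π i ⊆ R) ∧ (∀ i, ConnSet G (π i)) ∧
    (∀ i j, i ≠ j → Disjoint (π i) (π j)) ∧ (∀ v ∈ R, ∃ i, v ∈ π i)

/-- `π` is a connected allocation of all items among the agents in `N`. -/
def IsConnAlloc {V N : Type*} [Fintype V] [DecidableEq V] (G : SimpleGraph V)
    (π : N → Finset V) : Prop :=
  IsConnAllocOn G Finset.univ π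

/-- `π'` is a Pareto-improvement of `π`. -/
def ParetoImproves {V N : Type*} (u : N → Finset V → ℝ)
    (π' π : N → Finset V) : Prop :=
  (∀ i, u i (π i) ≤ u i (π' i)) ∧ ∃ i, u i (π i) < u i (π' i)

/-- `π` is Pareto-optimal: no connected allocation Pareto-improves it. -/
def ParetoOptimal {V N : Type*} [Fintype V] [DecidableEq V] (G : SimpleGraph V)
    (u : N → Finset V → ℝ) (π : N → Finset V) : Prop :=
  ∀ π', IsConnAlloc G π' → ¬ ParetoImproves u π' π

/-- `π` satisfies EF1: any envy can be removed by deleting a single item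
(keeping the envied bundle connected). -/
def EF1 {V N : Type*} [Fintype V] [DecidableEq V] (G : SimpleGraph V)
    (u : N → Finset V → ℝ) (π : N → Finset V) : Prop :=
  ∀ i j, u i (π j) ≤ u i (π i) ∨
    ∃ v ∈ π j, ConnSet G ((π j).erase v) ∧ u i ((π j).erase v) ≤ u i (π i)

/-- The maximin fair share of an agent with valuation `u`, when the items are
divided into `|N|` connected bundles. -/
noncomputable def mmsVal {V : Type*} (N : Type*) [Fintype V] [DecidableEq V]
    (G : SimpleGraph V) (u : Finset V → ℝ) : ℝ :=
  sSup {x : ℝ | ∃ P : N → Finset V, IsConnAlloc G P ∧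
    x = sInf (Set.range fun j => u (P j))}

/-- `π` is an MMS allocation: every agent gets at least her maximin fair share. -/
def IsMMS {V N : Type*} [Fintype V] [DecidableEq V] (G : SimpleGraph V)
    (u : N → Finset V → ℝ) (π : N → Finset V) : Prop :=
  ∀ i, mmsVal N G (u i) ≤ u i (π i)

namespace SimpleGraph

theorem Walk.mem_support_of_le_of_le_pathGraph {m : ℕ} {a b y : Fin m}
    (p : (pathGraph m).Walk a b) (hay : a ≤ y) (hyb : y ≤ b) : y ∈ p.support := by
  induction p with
  | nil => simp [le_antisymm hyb hay]
  | @cons a c b hac p ih =>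
    rcases hay.eq_or_lt with rfl | hay
    · simp
    · rw [pathGraph_adj] at hac
      refine List.mem_cons_of_mem _ (ih ?_ hyb)
      simp only [Fin.lt_def, Fin.le_def] at hay ⊢
      omega

theorem connSet_pathGraph_iff {m : ℕ} {X : Finset (Fin m)} :
    ConnSet (pathGraph m) X ↔ (X : Set (Fin m)).OrdConnected := by
  constructor
  · refine fun hX => ⟨fun x hx z hz y ⟨hxy, hyz⟩ => ?_⟩
    obtain ⟨p⟩ := hX ⟨x, hx⟩ ⟨z, hz⟩
    have hy := (p.map (Embedding.induce (X : Set (Fin m))).toHom).mem_support_of_le_of_le_pathGraph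
      hxy hyz
    rw [Walk.support_map, List.mem_map] at hy
    obtain ⟨y', -, rfl⟩ := hy
    exact y'.2
  · intro hX
    have reach : ∀ x z : (X : Set (Fin m)), x.1 ≤ z.1 →
        (pathGraph m |>.induce (X : Set (Fin m))).Reachable x z := by
      rintro ⟨x, hx⟩ ⟨⟨n, hn⟩, hz⟩ (hxn : x.val ≤ n)
      induction n, hxn using Nat.le_induction with
      | base => rfl
      | succ n hxn ih =>
        have hnX : (⟨n, by omega⟩ : Fin m) ∈ (X : Set (Fin m)) :=
          hX.out hx hz ⟨Fin.le_def.mpr hxn, Fin.le_def.mpr (by simp)⟩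
        refine (ih _ hnX).trans (Adj.reachable ?_)
        simp [pathGraph_adj]
    intro x z
    rcases le_total x.1 z.1 with h | h
    exacts [reach x z h, (reach z x h).symm]

end SimpleGraph

theorem Set.OrdConnected.Ioc_union {α : Type*} [LinearOrder α] {s : Set α} {k t : α}
    (hs : s.OrdConnected) (hks : ∀ x ∈ s, k < x) (hcover : ∀ y, t < y → ∃ x ∈ s, x ≤ y) :
    (Set.Ioc k t ∪ s).OrdConnected := by
  refine ⟨fun x hx z hz y ⟨hxy, hyz⟩ => ?_⟩
  by_cases hyt : y ≤ t
  · have hkx : k < x := hx.elim (·.1) (hks x)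
    exact Or.inl ⟨hkx.trans_le hxy, hyt⟩
  · rw [not_le] at hyt
    have hzs : z ∈ s := hz.resolve_left fun hz => (hyt.trans_le hyz).not_ge hz.2
    obtain ⟨x', hx's, hx'y⟩ := hcover y hyt
    exact Or.inr (hs.out hx's hzs ⟨hx'y, hyz⟩)

theorem Finset.mem_of_sum_univ_le_sum {ι M : Type*} [Fintype ι] [AddCommMonoid M]
    [PartialOrder M] [IsOrderedCancelAddMonoid M] {f : ι → M} (hf : ∀ v, 0 ≤ f v)
    {s : Finset ι} (h : ∑ v, f v ≤ ∑ v ∈ s, f v) {v : ι} (hv : 0 < f v) : v ∈ s := by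
  by_contra hvs
  exact (sum_lt_sum_of_subset (subset_univ s) (mem_univ v) hvs hv fun j _ _ => hf j).not_ge h

section Allocations

variable {V N : Type*} [DecidableEq V] {G : SimpleGraph V} {R : Finset V} {π : N → Finset V}

theorem IsConnAllocOn.restrict_ne (hπ : IsConnAllocOn G R π) (i : N) :
    IsConnAllocOn G (R \ π i) (fun j : {j // j ≠ i} => π j) := by
  obtain ⟨hsub, hconn, hdisj, hcov⟩ := hπ
  refine ⟨fun j => subset_sdiff.mpr ⟨hsub j, hdisj j i j.2⟩, fun j => hconn j,
    fun j j' hjj' => hdisj j j' (Subtype.coe_ne_coe.mpr hjj'), fun v hv => ?_⟩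
  obtain ⟨hvR, hvi⟩ := mem_sdiff.mp hv
  obtain ⟨j, hj⟩ := hcov v hvR
  exact ⟨⟨j, fun hji => hvi (hji ▸ hj)⟩, hj⟩

theorem IsConnAllocOn.update_union [DecidableEq N] (hπ : IsConnAllocOn G R π) {C : Finset V}
    (hCR : Disjoint C R) (j₀ : N) (hconnC : ConnSet G (C ∪ π j₀)) :
    IsConnAllocOn G (C ∪ R) (Function.update π j₀ (C ∪ π j₀)) := by
  obtain ⟨hsub, hconn, hdisj, hcov⟩ := hπ
  have hCdisj : ∀ j, Disjoint C (π j) := fun j => hCR.mono_right (hsub j)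
  refine ⟨fun j => ?_, fun j => ?_, fun j j' hjj' => ?_, fun v hv => ?_⟩
  · rcases eq_or_ne j j₀ with rfl | hj
    · simpa using union_subset_union_right (hsub j)
    · simpa [hj] using (hsub j).trans subset_union_right
  · rcases eq_or_ne j j₀ with rfl | hj
    · simpa using hconnC
    · simpa [hj] using hconn j
  · rcases eq_or_ne j j₀ with rfl | hj
    · simpa [hjj'.symm] using disjoint_union_left.mpr ⟨hCdisj j', hdisj j j' hjj'⟩
    rcases eq_or_ne j' j₀ with rfl | hj'
    · simpa [hj] using disjoint_union_right.mpr ⟨(hCdisj j).symm, hdisj j j' hjj'⟩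
    · simpa [hj, hj'] using hdisj j j' hjj'
  · rcases mem_union.mp hv with hvC | hvR
    · exact ⟨j₀, by simp [hvC]⟩
    obtain ⟨j, hj⟩ := hcov v hvR
    refine ⟨j, ?_⟩
    rcases eq_or_ne j j₀ with rfl | hj'
    · simp [hj]
    · simpa [hj'] using hj

end Allocations

open SimpleGraph in
theorem IsConnAlloc.exists_connAllocOn_lt_of_prefix {m : ℕ} {N : Type*} [DecidableEq N]
    [Nontrivial N] {π : N → Finset (Fin m)} (hπ : IsConnAlloc (pathGraph m) π) {i : N}
    {k : Fin m} (hpre : ∀ v ≤ k, v ∈ π i) :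
    ∃ π' : {j // j ≠ i} → Finset (Fin m),
      IsConnAllocOn (pathGraph m) (univ.filter (k < ·)) π' ∧ ∀ j, π j.1 ⊆ π' j := by
  set t := (π i).max' ⟨k, hpre k le_rfl⟩
  have hkt : k ≤ t := le_max' _ _ (hpre k le_rfl)
  have hπi : π i = univ.filter (· ≤ t) := by
    ext v
    refine ⟨fun hv => by simpa using le_max' _ _ hv, fun hvt => ?_⟩
    rcases le_total v k with hvk | hkv
    · exact hpre v hvk
    · exact (connSet_pathGraph_iff.mp (hπ.2.1 i)).out (hpre k le_rfl) (max'_mem _ _)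
        ⟨hkv, by simpa using hvt⟩
  have hrest : IsConnAllocOn (pathGraph m) (univ.filter (t < ·)) (fun j : {j // j ≠ i} => π j) := by
    have hcompl : univ \ π i = univ.filter (t < ·) := by ext; simp [hπi]
    simpa only [hcompl] using hπ.restrict_ne i
  -- the agent receiving the first item after `t`, if there is one, can absorb `Ioc k t`
  obtain ⟨j₀, hj₀⟩ : ∃ j₀ : {j // j ≠ i}, ∀ y, t < y → ∃ x ∈ π j₀, x ≤ y := by
    by_cases hR : (univ.filter (t < ·)).Nonempty
    · obtain ⟨j₀, hj₀⟩ := hrest.2.2.2 _ (min'_mem _ hR)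
      exact ⟨j₀, fun y hy => ⟨_, hj₀, min'_le _ _ (by simpa using hy)⟩⟩
    · obtain ⟨j₀, hj₀⟩ := exists_ne i
      exact ⟨⟨j₀, hj₀⟩, fun y hy => absurd ⟨y, by simpa using hy⟩ hR⟩
  have hconn : ConnSet (pathGraph m) (Ioc k t ∪ π j₀) := by
    rw [connSet_pathGraph_iff, coe_union, coe_Ioc]
    refine (connSet_pathGraph_iff.mp (hrest.2.1 j₀)).Ioc_union (fun x hx => ?_) hj₀
    exact hkt.trans_lt (by simpa using hrest.1 j₀ hx)
  have hdisj : Disjoint (Ioc k t) (univ.filter (t < ·)) :=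
    disjoint_left.mpr fun v hv hv' => (mem_Ioc.mp hv).2.not_gt (by simpa using hv')
  have hcover : Ioc k t ∪ univ.filter (t < ·) = univ.filter (k < ·) := by
    ext v
    simp only [mem_union, mem_Ioc, mem_filter, mem_univ, true_and]
    constructor
    · rintro (hv | hv)
      exacts [hv.1, hkt.trans_lt hv]
    · intro hv
      rcases le_or_gt v t with hvt | hvt
      exacts [Or.inl ⟨hv, hvt⟩, Or.inr hvt]
  refine ⟨Function.update (fun j => π j.1) j₀ (Ioc k t ∪ π j₀), ?_, fun j => ?_⟩
  · simpa [hcover] using hrest.update_union hdisj j₀ hconn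
  · rcases eq_or_ne j j₀ with rfl | hj
    · simp
    · simp [hj]

theorem stmt0_general {m : ℕ} {N : Type*} [Fintype N] [DecidableEq N]
    (hm : 0 < m) (hN : 2 ≤ Fintype.card N)
    (w : N → Fin m → ℝ) (hw : ∀ i v, 0 ≤ w i v)
    (u : N → Finset (Fin m) → ℝ)
    (hu : ∀ i X, ConnSet (SimpleGraph.pathGraph m) X → u i X = ∑ v ∈ X, w i v)
    (i : N) (hi1 : 0 < w i ⟨0, hm⟩)
    (k : Fin m) (hk : 0 < w i k) (hkmax : ∀ v, 0 < w i v → v ≤ k)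
    (π : N → Finset (Fin m))
    (hπ : IsConnAlloc (SimpleGraph.pathGraph m) π)
    (hπi : π i = Finset.univ.filter (· ≤ k))
    (hrestPO : ∀ π' : {j : N // j ≠ i} → Finset (Fin m),
      IsConnAllocOn (SimpleGraph.pathGraph m) (Finset.univ.filter (k < ·)) π' →
      ¬ ParetoImproves (fun j : {j : N // j ≠ i} => u j.1) π'
        (fun j : {j : N // j ≠ i} => π j.1)) :
    ParetoOptimal (SimpleGraph.pathGraph m) u π := by
  have : Nontrivial N := Fintype.one_lt_card_iff_nontrivial.mp hN
  rintro π' hπ' ⟨hle, j₀, hlt⟩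
  have hui : u i (π i) = ∑ v, w i v := by
    rw [hu i _ (hπ.2.1 i), hπi]
    exact sum_filter_of_ne fun v _ hv => hkmax v ((hw i v).lt_of_ne' hv)
  have hui' : u i (π' i) = ∑ v ∈ π' i, w i v := hu i _ (hπ'.2.1 i)
  have hpos : ∀ v, 0 < w i v → v ∈ π' i :=
    fun v => mem_of_sum_univ_le_sum (hw i) (hui ▸ hui' ▸ hle i)
  have hpre : ∀ v ≤ k, v ∈ π' i := fun v hvk =>
    (SimpleGraph.connSet_pathGraph_iff.mp (hπ'.2.1 i)).out (hpos _ hi1) (hpos k hk)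
      ⟨Fin.le_def.mpr (Nat.zero_le _), hvk⟩
  obtain ⟨π'', hπ'', hsub⟩ := hπ'.exists_connAllocOn_lt_of_prefix hpre
  have hmono : ∀ j : {j // j ≠ i}, u j (π' j) ≤ u j (π'' j) := fun j => by
    rw [hu _ _ (hπ'.2.1 j), hu _ _ (hπ''.2.1 j)]
    exact sum_le_sum_of_subset_of_nonneg (hsub j) fun v _ _ => hw j v
  have hj₀ : j₀ ≠ i := by
    rintro rfl
    exact hlt.not_ge (hui ▸ hui' ▸ sum_le_univ_sum_of_nonneg (hw j₀))
  exact hrestPO π'' hπ'' ⟨fun j => (hle j).trans (hmono j), ⟨j₀, hj₀⟩, hlt.trans_le (hmono ⟨j₀, hj₀⟩)⟩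

/-- correctness of the recursive step of the path algorithm.
If agent `i` positively values the left-most vertex, receives the minimal
prefix bundle `V_i = {v : v ≤ k}` covering all items she values positively
(where `k` is the largest index she values positively), and the restriction
of `π` to the other agents is a Pareto-optimal connected allocation of the
remaining subpath `{v : k < v}`, then `π` is Pareto-optimal. -/
theorem stmt0 {m : ℕ} {N : Type*} [Fintype N] [DecidableEq N]
    (hm : 0 < m) (hN : 2 ≤ Fintype.card N)
    (w : N → Fin m → ℝ) (hw : ∀ i v, 0 ≤ w i v)
    (u : N → Finset (Fin m) → ℝ)
    (hu : ∀ i X, ConnSet (SimpleGraph.pathGraph m) X → u i X = ∑ v ∈ X, w i v)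
    (i : N) (hi1 : 0 < w i ⟨0, hm⟩)
    (k : Fin m) (hk : 0 < w i k) (hkmax : ∀ v, 0 < w i v → v ≤ k)
    (π : N → Finset (Fin m))
    (hπ : IsConnAlloc (SimpleGraph.pathGraph m) π)
    (hπi : π i = Finset.univ.filter (· ≤ k))
    (hrest : IsConnAllocOn (SimpleGraph.pathGraph m)
      (Finset.univ.filter (k < ·)) (fun j : {j : N // j ≠ i} => π j.1))
    (hrestPO : ∀ π' : {j : N // j ≠ i} → Finset (Fin m),
      IsConnAllocOn (SimpleGraph.pathGraph m) (Finset.univ.filter (k < ·)) π' →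
      ¬ ParetoImproves (fun j : {j : N // j ≠ i} => u j.1) π'
        (fun j : {j : N // j ≠ i} => π j.1)) :
    ParetoOptimal (SimpleGraph.pathGraph m) u π :=
  stmt0_general hm hN w hw u hu i hi1 k hk hkmax π hπ hπi hrestPO
end

section
/- Let (X,S) be an X3C instance. Construct the following allocation instance: the graph G is the disjoint union over S ∈ S of paths P_S = (v_{S,1}, v_{S,2}, v_{S,3}); the agents are, for each x ∈ X, an agent i_x with binary additive valuation approving exactly the items v_{S,j} with S^j = x, and s−r dummy agents d_1,…,d_{s−r}, each approving every item. Then for every Pareto-optimal connected allocation π of this instance, the following are equivalent: (a) u_{i_x}(π(i_x)) = 1 for all x ∈ X and u_{d_k}(π(d_k)) = 3 for all k ∈ {1,…,s−r}; (b) the X3C instance (X,S) has an exact cover. -/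
open Finset

-- connected sets have constant first coordinate
lemma reach_fst {s : ℕ} {X : Finset (Fin s × Fin 3)}
    {a b : ↑(X : Set (Fin s × Fin 3))}
    (h : ((SimpleGraph.fromRel
      (fun a b : Fin s × Fin 3 => a.1 = b.1 ∧ (a.2 : ℕ) + 1 = (b.2 : ℕ))).induce
      (X : Set (Fin s × Fin 3))).Reachable a b) :
    (a : Fin s × Fin 3).1 = (b : Fin s × Fin 3).1 := by
  obtain ⟨w⟩ := h
  induction w with
  | nil => rfl
  | cons hadj p ih =>
    refine Eq.trans ?_ ih
    rw [SimpleGraph.comap_adj, SimpleGraph.fromRel_adj] at hadj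
    obtain ⟨-, h' | h'⟩ := hadj
    · exact h'.1
    · exact h'.1.symm

lemma connset_fst {s : ℕ} {X : Finset (Fin s × Fin 3)}
    (h : ConnSet (SimpleGraph.fromRel
      (fun a b : Fin s × Fin 3 => a.1 = b.1 ∧ (a.2 : ℕ) + 1 = (b.2 : ℕ))) X)
    {a b : Fin s × Fin 3} (ha : a ∈ X) (hb : b ∈ X) : a.1 = b.1 :=
  reach_fst (h ⟨a, ha⟩ ⟨b, hb⟩)

lemma connset_card_le {s : ℕ} {X : Finset (Fin s × Fin 3)}
    (h : ConnSet (SimpleGraph.fromRel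
      (fun a b : Fin s × Fin 3 => a.1 = b.1 ∧ (a.2 : ℕ) + 1 = (b.2 : ℕ))) X) :
    X.card ≤ 3 := by
  calc X.card ≤ (Finset.univ : Finset (Fin 3)).card := by
        apply Finset.card_le_card_of_injOn (fun v => v.2) (fun _ _ => mem_univ _)
        intro v hv w hw hvw
        exact Prod.ext (connset_fst h hv hw) hvw
    _ = 3 := by simp

lemma connset_of_subsingleton {V : Type*} (G : SimpleGraph V) {X : Finset V}
    (h : X.card ≤ 1) : ConnSet G X := by
  intro a b
  have : a = b := Subtype.ext (Finset.card_le_one.mp h _ a.2 _ b.2)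
  exact this ▸ SimpleGraph.Reachable.refl _

lemma path_card {s : ℕ} (k : Fin s) :
    (Finset.univ.filter (fun v : Fin s × Fin 3 => v.1 = k)).card = 3 := by
  have : Finset.univ.filter (fun v : Fin s × Fin 3 => v.1 = k)
      = ({k} : Finset (Fin s)) ×ˢ Finset.univ := by
    ext ⟨a, b⟩; simp [Finset.mem_product, eq_comm]
  rw [this, Finset.card_product]; simp

lemma path_conn {s : ℕ} (k : Fin s) :
    ConnSet (SimpleGraph.fromRel
      (fun a b : Fin s × Fin 3 => a.1 = b.1 ∧ (a.2 : ℕ) + 1 = (b.2 : ℕ)))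
      (Finset.univ.filter (fun v : Fin s × Fin 3 => v.1 = k)) := by
  set G := SimpleGraph.fromRel
      (fun a b : Fin s × Fin 3 => a.1 = b.1 ∧ (a.2 : ℕ) + 1 = (b.2 : ℕ)) with hGdef
  set X := Finset.univ.filter (fun v : Fin s × Fin 3 => v.1 = k) with hX
  have hmem : ∀ j : Fin 3, (k, j) ∈ X := by intro j; simp [hX]
  set p : Fin 3 → ↑(X : Set (Fin s × Fin 3)) := fun j => ⟨(k, j), hmem j⟩ with hp
  have hadj : ∀ j j' : Fin 3, (j : ℕ) + 1 = (j' : ℕ) →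
      (G.induce (X : Set (Fin s × Fin 3))).Adj (p j) (p j') := by
    intro j j' hjj'
    rw [SimpleGraph.comap_adj, SimpleGraph.fromRel_adj]
    refine ⟨?_, Or.inl ⟨rfl, hjj'⟩⟩
    intro hpe
    have : j = j' := (Prod.ext_iff.mp hpe).2
    omega
  have hmid : ∀ j : Fin 3,
      (G.induce (X : Set (Fin s × Fin 3))).Reachable (p 1) (p j) := by
    intro j
    rcases j with ⟨jv, hj⟩
    interval_cases jv
    · exact ((hadj 0 1 rfl).symm).reachable
    · exact SimpleGraph.Reachable.refl _
    · exact (hadj 1 2 rfl).reachable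
  intro a b
  have hav : (a : Fin s × Fin 3) = (k, (a : Fin s × Fin 3).2) := by
    have := a.2
    simp only [hX, Finset.coe_filter, Set.mem_setOf_eq] at this
    exact Prod.ext this.2 rfl
  have hbv : (b : Fin s × Fin 3) = (k, (b : Fin s × Fin 3).2) := by
    have := b.2
    simp only [hX, Finset.coe_filter, Set.mem_setOf_eq] at this
    exact Prod.ext this.2 rfl
  have ha2 : a = p (a : Fin s × Fin 3).2 := Subtype.ext hav
  have hb2 : b = p (b : Fin s × Fin 3).2 := Subtype.ext hbv
  rw [ha2, hb2]
  exact (hmid _).symm.trans (hmid _)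

/-- the X3C forest instance. Items are `Fin s × Fin 3`
(item `(k,j)` is `v_{S_k, j+1}`), connected by the disjoint union of the
3-paths `P_{S_k}`. Agents are `Sum.inl x` (the agents `i_x`) and `Sum.inr k`
(the dummy agents `d_k`). For every Pareto-optimal connected allocation `π`,
the "perfect" utility profile is achieved iff the X3C instance has an exact
cover. -/
theorem stmt4 (r s : ℕ) (hrs : r ≤ s)
    (S : Fin s → Fin 3 → Fin (3 * r)) (hS : ∀ k, Function.Injective (S k))
    (G : SimpleGraph (Fin s × Fin 3))
    (hG : G = SimpleGraph.fromRel
      (fun a b => a.1 = b.1 ∧ (a.2 : ℕ) + 1 = (b.2 : ℕ)))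
    (A : (Fin (3 * r) ⊕ Fin (s - r)) → Finset (Fin s × Fin 3))
    (hAx : ∀ x, A (Sum.inl x) = Finset.univ.filter (fun v => S v.1 v.2 = x))
    (hAd : ∀ k, A (Sum.inr k) = Finset.univ)
    (u : (Fin (3 * r) ⊕ Fin (s - r)) → Finset (Fin s × Fin 3) → ℝ)
    (hu : ∀ i X, u i X = ((X ∩ A i).card : ℝ))
    (π : (Fin (3 * r) ⊕ Fin (s - r)) → Finset (Fin s × Fin 3))
    (hπ : IsConnAlloc G π) (hPO : ParetoOptimal G u π) :
    ((∀ x, u (Sum.inl x) (π (Sum.inl x)) = 1) ∧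
     (∀ k, u (Sum.inr k) (π (Sum.inr k)) = 3)) ↔
    (∃ S' : Finset (Fin s), S'.card = r ∧
      ∀ x : Fin (3 * r), ∃ k ∈ S', ∃ j, S k j = x) := by
  subst hG
  obtain ⟨-, hconn, hdisj, -⟩ := hπ
  constructor
  · rintro ⟨h1, h3⟩
    have h1' : ∀ x, (π (Sum.inl x) ∩ A (Sum.inl x)).card = 1 := by
      intro x; have := h1 x; rw [hu] at this; exact_mod_cast this
    have h3' : ∀ k, (π (Sum.inr k)).card = 3 := by
      intro k; have := h3 k; rw [hu, hAd, Finset.inter_univ] at this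
      exact_mod_cast this
    have hne : ∀ k, (π (Sum.inr k)).Nonempty := fun k =>
      Finset.card_pos.mp (by rw [h3' k]; norm_num)
    choose w hw using hne
    have hfst : ∀ k v, v ∈ π (Sum.inr k) → v.1 = (w k).1 := fun k v hv =>
      connset_fst (hconn _) hv (hw k)
    have hall : ∀ k (j : Fin 3), ((w k).1, j) ∈ π (Sum.inr k) := by
      intro k j
      have himg : (π (Sum.inr k)).image Prod.snd = Finset.univ := by
        apply Finset.eq_univ_of_card
        rw [Finset.card_image_of_injOn, h3']
        · simp
        · intro v hv v' hv' h2
          exact Prod.ext ((hfst k v hv).trans (hfst k v' hv').symm) h2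
      have hj : j ∈ (π (Sum.inr k)).image Prod.snd := himg ▸ mem_univ j
      obtain ⟨v, hv, hv2⟩ := Finset.mem_image.mp hj
      have hveq : v = ((w k).1, j) := Prod.ext (hfst k v hv) hv2
      exact hveq ▸ hv
    have hinj : Function.Injective (fun k => (w k).1) := by
      intro k k' h
      by_contra hne'
      have h0 : ((w k).1, (0 : Fin 3)) ∈ π (Sum.inr k) := hall k 0
      have h0' : ((w k).1, (0 : Fin 3)) ∈ π (Sum.inr k') := by
        have h2 : (w k).1 = (w k').1 := h
        rw [h2]; exact hall k' 0
      exact Finset.disjoint_left.mp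
        (hdisj (Sum.inr k) (Sum.inr k') (fun hc => hne' (Sum.inr.inj hc))) h0 h0'
    refine ⟨Finset.univ \ Finset.univ.image (fun k => (w k).1), ?_, ?_⟩
    · rw [Finset.card_sdiff_of_subset (Finset.subset_univ _),
        Finset.card_image_of_injective _ hinj]
      simp only [Finset.card_univ, Fintype.card_fin]
      omega
    · intro x
      obtain ⟨v, hv⟩ := Finset.card_eq_one.mp (h1' x)
      have hvmem : v ∈ π (Sum.inl x) ∩ A (Sum.inl x) := by
        rw [hv]; exact Finset.mem_singleton_self v
      obtain ⟨hx1, hx2⟩ := Finset.mem_inter.mp hvmem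
      rw [hAx, Finset.mem_filter] at hx2
      refine ⟨v.1, ?_, v.2, hx2.2⟩
      rw [Finset.mem_sdiff]
      refine ⟨mem_univ _, ?_⟩
      intro hmemimg
      obtain ⟨k₀, -, hk₀⟩ := Finset.mem_image.mp hmemimg
      have hvin : v ∈ π (Sum.inr k₀) := by
        have : v = ((w k₀).1, v.2) := Prod.ext hk₀.symm rfl
        rw [this]; exact hall k₀ v.2
      exact Finset.disjoint_left.mp
        (hdisj (Sum.inl x) (Sum.inr k₀) (by simp)) hx1 hvin
  · rintro ⟨S', hScard, hScov⟩
    have hCcard : (Finset.univ \ S').card = s - r := by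
      rw [Finset.card_sdiff_of_subset (Finset.subset_univ _), hScard]
      simp
    set C := Finset.univ \ S' with hC
    let e : ↥C ≃ Fin (s - r) := C.equivFinOfCardEq hCcard
    set π' : (Fin (3 * r) ⊕ Fin (s - r)) → Finset (Fin s × Fin 3) :=
      Sum.elim
        (fun x => (S' ×ˢ Finset.univ).filter (fun v => S v.1 v.2 = x))
        (fun k => Finset.univ.filter
          (fun v : Fin s × Fin 3 => v.1 = (e.symm k : Fin s))) with hπ'
    have hone : ∀ x : Fin (3 * r),
        ((S' ×ˢ Finset.univ).filter (fun v => S v.1 v.2 = x)).card = 1 := by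
      have hsum : ∑ x ∈ Finset.univ,
          ((S' ×ˢ Finset.univ).filter (fun v => S v.1 v.2 = x)).card
          = 3 * r := by
        rw [← Finset.card_eq_sum_card_fiberwise
          (fun v _ => mem_univ (S v.1 v.2))]
        rw [Finset.card_product, hScard]
        simp [Nat.mul_comm]
      have hpos : ∀ x ∈ (Finset.univ : Finset (Fin (3 * r))),
          1 ≤ ((S' ×ˢ Finset.univ).filter (fun v => S v.1 v.2 = x)).card := by
        intro x _
        obtain ⟨k, hk, j, hkj⟩ := hScov x
        apply Finset.card_pos.mpr
        exact ⟨(k, j), Finset.mem_filter.mpr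
          ⟨Finset.mem_product.mpr ⟨hk, mem_univ _⟩, hkj⟩⟩
      intro x
      by_contra hxne
      have hxlt : 1 < ((S' ×ˢ Finset.univ).filter
          (fun v => S v.1 v.2 = x)).card := lt_of_le_of_ne (hpos x (mem_univ x)) (Ne.symm hxne)
      have := Finset.sum_lt_sum hpos ⟨x, mem_univ x, hxlt⟩
      rw [hsum] at this
      simp only [Finset.sum_const, Finset.card_univ, Fintype.card_fin,
        smul_eq_mul, mul_one] at this
      omega
    have huπ'x : ∀ x, u (Sum.inl x) (π' (Sum.inl x)) = 1 := by
      intro x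
      rw [hu]
      have hsub : π' (Sum.inl x) ⊆ A (Sum.inl x) := by
        intro v hv
        simp only [hπ', Sum.elim_inl, Finset.mem_filter] at hv
        rw [hAx, Finset.mem_filter]
        exact ⟨mem_univ _, hv.2⟩
      rw [Finset.inter_eq_left.mpr hsub]
      simp only [hπ', Sum.elim_inl]
      rw [hone x]; norm_num
    have huπ'd : ∀ k, u (Sum.inr k) (π' (Sum.inr k)) = 3 := by
      intro k
      rw [hu, hAd, Finset.inter_univ]
      simp only [hπ', Sum.elim_inr]
      rw [path_card]; norm_num
    have hπ'alloc : IsConnAlloc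
        (SimpleGraph.fromRel
          (fun a b : Fin s × Fin 3 => a.1 = b.1 ∧ (a.2 : ℕ) + 1 = (b.2 : ℕ)))
        π' := by
      refine ⟨fun i => Finset.subset_univ _, ?_, ?_, ?_⟩
      · rintro (x | k)
        · exact connset_of_subsingleton _ (le_of_eq (hone x))
        · exact path_conn _
      · rintro (x | k) (y | k') hij <;>
          rw [Finset.disjoint_left] <;> intro v hv hv'
        · simp only [hπ', Sum.elim_inl, Finset.mem_filter] at hv hv'
          exact hij (by rw [← hv.2, ← hv'.2])
        · simp only [hπ', Sum.elim_inl, Sum.elim_inr, Finset.mem_filter,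
            Finset.mem_product] at hv hv'
          have h1 : v.1 ∈ S' := hv.1.1
          have h2 : (e.symm k' : Fin s) ∈ Finset.univ \ S' := (e.symm k').2
          exact (Finset.mem_sdiff.mp h2).2 (hv'.2 ▸ h1)
        · simp only [hπ', Sum.elim_inl, Sum.elim_inr, Finset.mem_filter,
            Finset.mem_product] at hv hv'
          have h1 : v.1 ∈ S' := hv'.1.1
          have h2 : (e.symm k : Fin s) ∈ Finset.univ \ S' := (e.symm k).2
          exact (Finset.mem_sdiff.mp h2).2 (hv.2 ▸ h1)
        · simp only [hπ', Sum.elim_inr, Finset.mem_filter] at hv hv'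
          apply hij
          have : e.symm k = e.symm k' := Subtype.ext (hv.2 ▸ hv'.2)
          rw [e.symm.injective this]
      · intro v _
        by_cases hvS : v.1 ∈ S'
        · exact ⟨Sum.inl (S v.1 v.2), by simp [hπ', hvS]⟩
        · have hvC : v.1 ∈ C := by rw [hC, Finset.mem_sdiff]; exact ⟨mem_univ _, hvS⟩
          refine ⟨Sum.inr (e ⟨v.1, hvC⟩), ?_⟩
          simp only [hπ', Sum.elim_inr, Finset.mem_filter]
          refine ⟨mem_univ _, ?_⟩
          rw [Equiv.symm_apply_apply]
    have hxle : ∀ x, (π (Sum.inl x) ∩ A (Sum.inl x)).card ≤ 1 := by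
      intro x
      apply Finset.card_le_one.mpr
      intro a ha b hb
      obtain ⟨ha1, ha2⟩ := Finset.mem_inter.mp ha
      obtain ⟨hb1, hb2⟩ := Finset.mem_inter.mp hb
      rw [hAx, Finset.mem_filter] at ha2 hb2
      have hfst : a.1 = b.1 := connset_fst (hconn (Sum.inl x)) ha1 hb1
      have : S a.1 a.2 = S a.1 b.2 := by
        rw [ha2.2, hfst, hb2.2]
      exact Prod.ext hfst (hS a.1 this)
    have hle : ∀ i, u i (π i) ≤ u i (π' i) := by
      rintro (x | k)
      · rw [huπ'x x, hu]
        exact_mod_cast hxle x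
      · rw [huπ'd k, hu, hAd, Finset.inter_univ]
        exact_mod_cast connset_card_le (hconn (Sum.inr k))
    have hge : ∀ i, u i (π' i) ≤ u i (π i) := by
      intro i
      by_contra hlt
      exact hPO π' hπ'alloc ⟨hle, i, not_le.mp hlt⟩
    have heq : ∀ i, u i (π i) = u i (π' i) :=
      fun i => le_antisymm (hle i) (hge i)
    exact ⟨fun x => (heq (Sum.inl x)).trans (huπ'x x),
      fun k => (heq (Sum.inr k)).trans (huπ'd k)⟩
end

section
/- Let (X,S) be an X3C instance. Construct the following allocation instance on a tree: for each S ∈ S there are two paths P_S = (v_{S,1}, v_{S,2}, v_{S,3}) and P̂_S = (v̂_{S,1}, v̂_{S,2}, v̂_{S,3}), and there is one additional center vertex c adjacent to v_{S,2} and to v̂_{S,2} for every S ∈ S; G is the resulting tree. The agents, all with binary additive valuations, are: for each x ∈ X, an agent i_x approving exactly the items v_{S,j} with S^j = x, and an agent î_x approving exactly the items v̂_{S,j} with S^j = x; and for each k ∈ {1,…,s−r}, an agent d_k approving exactly all items v_{S,j} (S ∈ S, j ∈ {1,2,3}) and an agent d̂_k approving exactly all items v̂_{S,j}. Let N_o =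 {i_x : x ∈ X} ∪ {d_1,…,d_{s−r}} and V_o = {v_{S,j} : S ∈ S, j ∈ {1,2,3}}. Then for every Pareto-optimal connected allocation π satisfying π(i) ⊆ V_o for every i ∈ N_o, the following are equivalent: (a) u_{i_x}(π(i_x)) = 1 for all x ∈ X and u_{d_k}(π(d_k)) = 3 for all k ∈ {1,…,s−r}; (b) the X3C instance (X,S) has an exact cover. -/
open Finset

/-! Without the center, a connected bundle lies inside a single path `P_{S_k}`, so under `π`
the agent `i_x` gets utility at most 1 and `d_k` at most 3. If all these bounds are attained, the
dummies hold `s - r` whole paths and the `r` remaining sets cover every `x`. Conversely, an exact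
cover gives a connected allocation attaining every bound while no copy agent loses: `i_x` takes
its occurrence in the cover, the dummies take the unused paths, and each copy agent keeps its
bundle minus the original items, which stays connected because the original items meet the rest
of the tree only at the center. Pareto-optimality then forces `π` to attain the bounds as well. -/

namespace SimpleGraph

variable {V W : Type*} {G : SimpleGraph V} {H : SimpleGraph W}

theorem Reachable.map_of_adj_or_eq (f : V → W)
    (hf : ∀ ⦃a b⦄, G.Adj a b → f a = f b ∨ H.Adj (f a) (f b)) {a b : V}
    (h : G.Reachable a b) : H.Reachable (f a) (f b) := by
  rw [reachable_iff_reflTransGen] at h ⊢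
  refine Relation.ReflTransGen.lift' f (fun a b hab => ?_) _ _ h
  show Relation.ReflTransGen H.Adj (f a) (f b)
  rcases hf hab with heq | hadj
  · rw [heq]
  · exact .single hadj

end SimpleGraph

open SimpleGraph

section ConnSet

variable {V : Type*} {G : SimpleGraph V}

theorem ConnSet.apply_eq_of_adj {W : Type*} {X : Finset V} (hX : ConnSet G X) (f : V → W)
    (hf : ∀ a ∈ X, ∀ b ∈ X, G.Adj a b → f a = f b) {a b : V} (ha : a ∈ X) (hb : b ∈ X) :
    f a = f b := by
  have := (hX ⟨a, ha⟩ ⟨b, hb⟩).map_of_adj_or_eq (H := ⊥) (fun v => f v.1)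
    fun v w hvw => Or.inl (hf _ v.2 _ w.2 hvw)
  exact reachable_bot.mp this

theorem connSet_of_subsingleton {X : Finset V} (hX : (X : Set V).Subsingleton) :
    ConnSet G X :=
  have := hX.coe_sort
  Preconnected.of_subsingleton

/-- Collapsing `P` onto `c` is a retraction of `X` onto its part outside `P` that maps edges to
edges or loops. -/
theorem ConnSet.filter_not {X : Finset V} (hX : ConnSet G X) {P : V → Prop}
    [DecidablePred P] {c : V} (hc : ∀ a b, G.Adj a b → P a → ¬ P b → b = c) :
    ConnSet G (X.filter fun v => ¬ P v) := by
  set X' := X.filter fun v => ¬ P v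
  rintro ⟨a, ha⟩ ⟨b, hb⟩
  have ha' : a ∈ X' := ha
  have hb' : b ∈ X' := hb
  classical
  let c₀ : ↥(X' : Set V) := if h : c ∈ X' then ⟨c, h⟩ else ⟨a, ha⟩
  let ρ : ↥(X : Set V) → ↥(X' : Set V) := fun v =>
    if h : P v.1 then c₀ else ⟨v.1, mem_filter.2 ⟨v.2, h⟩⟩
  have hρP : ∀ v, P v.1 → ρ v = c₀ := fun v h => dif_pos h
  have hρ : ∀ v (h : ¬ P v.1), ρ v = ⟨v.1, mem_filter.2 ⟨v.2, h⟩⟩ := fun v h => dif_neg h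
  have hc₀ : ∀ v : ↥(X : Set V), ¬ P v.1 → v.1 = c → ρ v = c₀ := by
    rintro ⟨v, hv⟩ hPv rfl
    rw [hρ _ hPv]
    exact (dif_pos (mem_filter.2 ⟨hv, hPv⟩)).symm
  have key := (hX ⟨a, (mem_filter.1 ha').1⟩ ⟨b, (mem_filter.1 hb').1⟩).map_of_adj_or_eq
    (H := G.induce X') ρ fun v w hvw => by
      by_cases hv : P v.1 <;> by_cases hw : P w.1
      · exact Or.inl ((hρP v hv).trans (hρP w hw).symm)
      · exact Or.inl ((hρP v hv).trans (hc₀ w hw (hc _ _ hvw hv hw)).symm)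
      · exact Or.inl ((hc₀ v hv (hc _ _ hvw.symm hw hv)).trans (hρP w hw).symm)
      · exact Or.inr (by rw [hρ v hv, hρ w hw]; exact hvw)
  rwa [hρ _ (mem_filter.1 ha').2, hρ _ (mem_filter.1 hb').2] at key

end ConnSet

namespace X3CTree

/-- `none` is the center, `some (k, false, j)` is `v_{S_k, j+1}` and `some (k, true, j)` is
`v̂_{S_k, j+1}`. -/
abbrev Item (s : ℕ) := Option (Fin s × Bool × Fin 3)

/-- `(Sum.inl x, false)` is `i_x` and `(Sum.inr k, false)` is `d_{k+1}`; the second component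
`true` gives their copies `î_x` and `d̂_{k+1}`. -/
abbrev Agent (r s : ℕ) := (Fin (3 * r) ⊕ Fin (s - r)) × Bool

def graph (s : ℕ) : SimpleGraph (Item s) :=
  SimpleGraph.fromRel fun a b =>
    (∃ (k : Fin s) (c : Bool) (j j' : Fin 3),
        a = some (k, c, j) ∧ b = some (k, c, j') ∧ (j : ℕ) + 1 = (j' : ℕ)) ∨
    (∃ (k : Fin s) (c : Bool), a = none ∧ b = some (k, c, 1))

variable {r s : ℕ}

def pathIndex : Item s → Option (Fin s × Bool) :=
  Option.map fun p => (p.1, p.2.1)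

def path (k : Fin s) (c : Bool) : Finset (Item s) :=
  univ.image fun j => some (k, c, j)

def origItems (s : ℕ) : Finset (Item s) :=
  univ.filter fun v => ∃ k j, v = some (k, false, j)

def approved (S : Fin s → Fin 3 → Fin (3 * r)) : Agent r s → Finset (Item s)
  | (Sum.inl x, c) => univ.filter fun v => ∃ k j, v = some (k, c, j) ∧ S k j = x
  | (Sum.inr _, c) => univ.filter fun v => ∃ k' j, v = some (k', c, j)

def utility (S : Fin s → Fin 3 → Fin (3 * r)) (i : Agent r s) (X : Finset (Item s)) : ℝ :=
  (#(X ∩ approved S i) : ℝ)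

theorem mem_path {k : Fin s} {c : Bool} {v : Item s} :
    v ∈ path k c ↔ ∃ j, v = some (k, c, j) := by
  simp [path, eq_comm]

theorem card_path (k : Fin s) (c : Bool) : #(path k c) = 3 := by
  rw [path, card_image_of_injective _ fun j j' h => by simpa using h, card_univ,
    Fintype.card_fin]

theorem connSet_path (k : Fin s) (c : Bool) : ConnSet (graph s) (path k c) := by
  have adj : ∀ j j' : Fin 3, (j : ℕ) + 1 = j' → (graph s).Adj (some (k, c, j)) (some (k, c, j')) :=
    fun j j' h => by
      rw [graph, SimpleGraph.fromRel_adj]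
      exact ⟨by simp; omega, .inl (.inl ⟨k, c, j, j', rfl, rfl, h⟩)⟩
  let p : (graph s).Walk (some (k, c, 0)) (some (k, c, 2)) :=
    .cons (adj 0 1 rfl) (.cons (adj 1 2 rfl) .nil)
  have hp : ((path k c : Finset (Item s)) : Set (Item s)) = {v | v ∈ p.support} := by
    ext v
    simp [mem_path, p, Fin.exists_fin_succ]
  rw [ConnSet, hp]
  exact p.connected_induce_support.preconnected

theorem mem_origItems {v : Item s} : v ∈ origItems s ↔ ∃ k, pathIndex v = some (k, false) := by
  rcases v with _ | ⟨k, c, j⟩ <;> simp [origItems, pathIndex]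

theorem none_notMem_origItems : none ∉ origItems s := by
  simp [origItems]

theorem eq_none_or_pathIndex_eq_of_adj {a b : Item s} (h : (graph s).Adj a b) :
    a = none ∨ b = none ∨ pathIndex a = pathIndex b := by
  rw [graph, SimpleGraph.fromRel_adj] at h
  rcases h.2 with (⟨k, c, j, j', rfl, rfl, -⟩ | ⟨k, c, rfl, rfl⟩) |
    (⟨k, c, j, j', rfl, rfl, -⟩ | ⟨k, c, rfl, rfl⟩) <;> simp [pathIndex]

theorem eq_none_of_adj {a b : Item s} (h : (graph s).Adj a b) (ha : a ∈ origItems s)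
    (hb : b ∉ origItems s) : b = none := by
  rcases eq_none_or_pathIndex_eq_of_adj h with rfl | hb' | hab
  · exact absurd ha none_notMem_origItems
  · exact hb'
  · exact absurd (mem_origItems.2 (hab ▸ mem_origItems.1 ha)) hb

theorem pathIndex_eq_of_connSet {X : Finset (Item s)} (hX : ConnSet (graph s) X)
    (hn : none ∉ X) {v w : Item s} (hv : v ∈ X) (hw : w ∈ X) : pathIndex v = pathIndex w :=
  hX.apply_eq_of_adj pathIndex (fun _ ha _ hb h => by
    rcases eq_none_or_pathIndex_eq_of_adj h with rfl | rfl | hab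
    · exact absurd ha hn
    · exact absurd hb hn
    · exact hab) hv hw

theorem subset_path_of_connSet {X : Finset (Item s)} (hX : ConnSet (graph s) X)
    (hn : none ∉ X) {k : Fin s} {c : Bool} {j : Fin 3} (hv : some (k, c, j) ∈ X) :
    X ⊆ path k c := by
  intro w hw
  rcases w with _ | ⟨k', c', j'⟩
  · exact absurd hw hn
  · have := pathIndex_eq_of_connSet hX hn hw hv
    simp only [pathIndex, Option.map_some, Option.some.injEq, Prod.mk.injEq] at this
    rw [this.1, this.2]
    exact mem_path.2 ⟨j', rfl⟩

section Bounds

variable {S : Fin s → Fin 3 → Fin (3 * r)} {X : Finset (Item s)}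

theorem card_inter_approved_inl_le_one (hS : ∀ k, Function.Injective (S k))
    (hX : ConnSet (graph s) X) (hn : none ∉ X) (x : Fin (3 * r)) (c : Bool) :
    #(X ∩ approved S (Sum.inl x, c)) ≤ 1 := by
  refine card_le_one.2 fun v hv w hw => ?_
  simp only [mem_inter, approved, mem_filter, mem_univ, true_and] at hv hw
  obtain ⟨hvX, k, j, rfl, hkj⟩ := hv
  obtain ⟨hwX, k', j', rfl, hkj'⟩ := hw
  have hk : k = k' := by
    simpa [pathIndex] using pathIndex_eq_of_connSet hX hn hvX hwX
  subst hk
  rw [hS k (hkj.trans hkj'.symm)]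

theorem card_le_three_of_connSet (hX : ConnSet (graph s) X) (hn : none ∉ X) : #X ≤ 3 := by
  rcases X.eq_empty_or_nonempty with rfl | ⟨_ | ⟨k, c, j⟩, hv⟩
  · simp
  · exact absurd hv hn
  · exact (card_le_card (subset_path_of_connSet hX hn hv)).trans (card_path k c).le

theorem exists_path_subset_of_card_inter_approved_inr (hX : ConnSet (graph s) X)
    (hn : none ∉ X) {m : Fin (s - r)} {c : Bool} (h3 : #(X ∩ approved S (Sum.inr m, c)) = 3) :
    ∃ k, path k c ⊆ X := by
  obtain ⟨v, hv⟩ := card_pos.1 (h3 ▸ three_pos)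
  simp only [mem_inter, approved, mem_filter, mem_univ, true_and] at hv
  obtain ⟨hvX, k, j, rfl⟩ := hv
  have hsub := subset_path_of_connSet hX hn hvX
  refine ⟨k, (eq_of_subset_of_card_le hsub ?_).ge⟩
  rw [card_path, ← h3]
  exact card_le_card inter_subset_left

end Bounds

section ExactCover

variable {S : Fin s → Fin 3 → Fin (3 * r)}

/-- The sets not used by the dummies `d_m` form an exact cover. -/
theorem exists_exactCover_of_disjoint (hrs : r ≤ s) {π : Agent r s → Finset (Item s)}
    (hdisj : ∀ i j, i ≠ j → Disjoint (π i) (π j)) (φ : Fin (s - r) → Fin s)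
    (hφ : ∀ m, path (φ m) false ⊆ π (Sum.inr m, false))
    (hx : ∀ x, ∃ k j, S k j = x ∧ some (k, false, j) ∈ π (Sum.inl x, false)) :
    ∃ S' : Finset (Fin s), #S' = r ∧ ∀ x, ∃ k ∈ S', ∃ j, S k j = x := by
  have hφ_mem : ∀ m j, some (φ m, false, j) ∈ π (Sum.inr m, false) :=
    fun m j => hφ m (mem_path.2 ⟨j, rfl⟩)
  have hφ_inj : Function.Injective φ := by
    intro m m' h
    by_contra hne
    exact disjoint_left.1 (hdisj _ _ (by simpa using hne)) (hφ_mem m 0) (h ▸ hφ_mem m' 0)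
  refine ⟨(univ.image φ)ᶜ, ?_, fun x => ?_⟩
  · rw [card_compl, card_image_of_injective _ hφ_inj, card_univ, Fintype.card_fin,
      Fintype.card_fin]
    omega
  · obtain ⟨k, j, hkj, hv⟩ := hx x
    refine ⟨k, mem_compl.2 fun hk => ?_, j, hkj⟩
    obtain ⟨m, -, rfl⟩ := mem_image.1 hk
    exact disjoint_left.1 (hdisj _ _ (by simp)) hv (hφ_mem m j)

theorem exists_exactCover_of_utility_eq (hrs : r ≤ s) {π : Agent r s → Finset (Item s)}
    (hπ : IsConnAlloc (graph s) π) (horig : ∀ a, π (a, false) ⊆ origItems s)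
    (h1 : ∀ x, utility S (Sum.inl x, false) (π (Sum.inl x, false)) = 1)
    (h3 : ∀ m, utility S (Sum.inr m, false) (π (Sum.inr m, false)) = 3) :
    ∃ S' : Finset (Fin s), #S' = r ∧ ∀ x, ∃ k ∈ S', ∃ j, S k j = x := by
  have hn : ∀ a, none ∉ π (a, false) := fun a h => none_notMem_origItems (horig a h)
  have hpath : ∀ m, ∃ k, path k false ⊆ π (Sum.inr m, false) := fun m =>
    exists_path_subset_of_card_inter_approved_inr (S := S) (m := m) (hπ.2.1 _) (hn _)
      (by have h := h3 m; unfold utility at h; exact_mod_cast h)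
  choose φ hφ using hpath
  refine exists_exactCover_of_disjoint hrs hπ.2.2.1 φ hφ fun x => ?_
  have h1x : #(π (Sum.inl x, false) ∩ approved S (Sum.inl x, false)) = 1 := by
    have h := h1 x; unfold utility at h; exact_mod_cast h
  obtain ⟨v, hv⟩ := card_pos.1 (h1x ▸ one_pos)
  simp only [mem_inter, approved, mem_filter, mem_univ, true_and] at hv
  obtain ⟨hvπ, k, j, rfl, hkj⟩ := hv
  exact ⟨k, j, hkj, hvπ⟩

end ExactCover

section CoverAlloc

variable {S : Fin s → Fin 3 → Fin (3 * r)} {S' : Finset (Fin s)}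

theorem eq_of_exactCover (hcard : #S' = r) (hcov : ∀ x, ∃ k ∈ S', ∃ j, S k j = x)
    {k k' : Fin s} {j j' : Fin 3} (hk : k ∈ S') (hk' : k' ∈ S') (h : S k j = S k' j') :
    k = k' ∧ j = j' := by
  have hinj : Set.InjOn (fun p : Fin s × Fin 3 => S p.1 p.2) ↑(S' ×ˢ (univ : Finset (Fin 3))) := by
    refine injOn_of_surjOn_of_card_le (t := univ) _ (fun _ _ => mem_coe.2 (mem_univ _))
      (fun x _ => ?_) ?_
    · obtain ⟨k, hk, j, rfl⟩ := hcov x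
      exact ⟨(k, j), by simpa using hk, rfl⟩
    · simp [card_product, hcard, mul_comm]
  simpa using hinj (x₁ := (k, j)) (x₂ := (k', j')) (by simpa using hk) (by simpa using hk') h

variable (S S')

def coverOwner (e : Fin (s - r) ≃ ↥S'ᶜ) (k : Fin s) (j : Fin 3) : Fin (3 * r) ⊕ Fin (s - r) :=
  if h : k ∈ S' then Sum.inl (S k j) else Sum.inr (e.symm ⟨k, mem_compl.2 h⟩)

def coverAlloc (e : Fin (s - r) ≃ ↥S'ᶜ) (π : Agent r s → Finset (Item s)) :
    Agent r s → Finset (Item s)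
  | (a, false) => univ.filter fun v => ∃ k j, v = some (k, false, j) ∧ coverOwner S S' e k j = a
  | (a, true) => (π (a, true)).filter fun v => v ∉ origItems s

variable {S S'} (e : Fin (s - r) ≃ ↥S'ᶜ) (π : Agent r s → Finset (Item s))

theorem mem_coverAlloc_false {a : Fin (3 * r) ⊕ Fin (s - r)} {v : Item s} :
    v ∈ coverAlloc S S' e π (a, false) ↔
      ∃ k j, v = some (k, false, j) ∧ coverOwner S S' e k j = a := by
  simp [coverAlloc]

theorem coverAlloc_false_subset (a : Fin (3 * r) ⊕ Fin (s - r)) :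
    coverAlloc S S' e π (a, false) ⊆ origItems s := fun v hv => by
  obtain ⟨k, j, rfl, -⟩ := (mem_coverAlloc_false e π).1 hv
  simp [origItems]

theorem coverAlloc_inl (hcard : #S' = r) (hcov : ∀ x, ∃ k ∈ S', ∃ j, S k j = x)
    {x : Fin (3 * r)} {k : Fin s} {j : Fin 3} (hk : k ∈ S') (hkj : S k j = x) :
    coverAlloc S S' e π (Sum.inl x, false) = {some (k, false, j)} := by
  ext v
  rw [mem_coverAlloc_false, mem_singleton]
  constructor
  · rintro ⟨k', j', rfl, h⟩
    unfold coverOwner at h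
    split_ifs at h with hk'
    obtain ⟨rfl, rfl⟩ := eq_of_exactCover hcard hcov hk' hk ((Sum.inl.inj h).trans hkj.symm)
    rfl
  · rintro rfl
    exact ⟨k, j, rfl, by rw [coverOwner, dif_pos hk, hkj]⟩

theorem coverAlloc_inr (m : Fin (s - r)) :
    coverAlloc S S' e π (Sum.inr m, false) = path (e m) false := by
  ext v
  rw [mem_coverAlloc_false, mem_path]
  constructor
  · rintro ⟨k, j, rfl, h⟩
    unfold coverOwner at h
    split_ifs at h with hk
    rw [← Sum.inr.inj h, Equiv.apply_symm_apply]
    exact ⟨j, rfl⟩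
  · rintro ⟨j, rfl⟩
    refine ⟨e m, j, rfl, ?_⟩
    rw [coverOwner, dif_neg (mem_compl.1 (e m).2)]
    simp

theorem isConnAlloc_coverAlloc (hcard : #S' = r) (hcov : ∀ x, ∃ k ∈ S', ∃ j, S k j = x)
    (hπ : IsConnAlloc (graph s) π) (horig : ∀ a, π (a, false) ⊆ origItems s) :
    IsConnAlloc (graph s) (coverAlloc S S' e π) := by
  refine ⟨fun _ => subset_univ _, ?_, ?_, fun v _ => ?_⟩
  · rintro ⟨a | m, _ | _⟩
    · obtain ⟨k, hk, j, hkj⟩ := hcov a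
      rw [coverAlloc_inl e π hcard hcov hk hkj]
      exact connSet_of_subsingleton (by simp)
    · exact (hπ.2.1 _).filter_not fun _ _ h ha hb => eq_none_of_adj h ha hb
    · rw [coverAlloc_inr]
      exact connSet_path _ _
    · exact (hπ.2.1 _).filter_not fun _ _ h ha hb => eq_none_of_adj h ha hb
  · rintro ⟨a, _ | _⟩ ⟨b, _ | _⟩ hab <;> refine disjoint_left.2 fun v hva hvb => ?_
    · obtain ⟨k, j, rfl, rfl⟩ := (mem_coverAlloc_false e π).1 hva
      obtain ⟨k', j', h, rfl⟩ := (mem_coverAlloc_false e π).1 hvb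
      simp only [Option.some.injEq, Prod.mk.injEq, true_and] at h
      exact hab (by rw [h.1, h.2])
    · exact (mem_filter.1 hvb).2 (coverAlloc_false_subset e π a hva)
    · exact (mem_filter.1 hva).2 (coverAlloc_false_subset e π b hvb)
    · exact disjoint_left.1 (hπ.2.2.1 _ _ hab) (mem_filter.1 hva).1 (mem_filter.1 hvb).1
  · by_cases hv : v ∈ origItems s
    · obtain ⟨k, j, rfl⟩ := (mem_filter.1 hv).2
      exact ⟨(coverOwner S S' e k j, false), (mem_coverAlloc_false e π).2 ⟨k, j, rfl, rfl⟩⟩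
    · obtain ⟨⟨a, _ | _⟩, hva⟩ := hπ.2.2.2 v (mem_univ _)
      · exact absurd (horig a hva) hv
      · exact ⟨(a, true), mem_filter.2 ⟨hva, hv⟩⟩

theorem utility_coverAlloc_inl (hcard : #S' = r) (hcov : ∀ x, ∃ k ∈ S', ∃ j, S k j = x)
    (x : Fin (3 * r)) :
    utility S (Sum.inl x, false) (coverAlloc S S' e π (Sum.inl x, false)) = 1 := by
  obtain ⟨k, hk, j, hkj⟩ := hcov x
  rw [utility, coverAlloc_inl e π hcard hcov hk hkj, inter_eq_left.2]
  · simp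
  · simpa [approved] using hkj

theorem utility_coverAlloc_inr (m : Fin (s - r)) :
    utility S (Sum.inr m, false) (coverAlloc S S' e π (Sum.inr m, false)) = 3 := by
  rw [utility, coverAlloc_inr, inter_eq_left.2, card_path]
  · norm_num
  · intro v hv
    obtain ⟨j, rfl⟩ := mem_path.1 hv
    simp [approved]

theorem utility_coverAlloc_true (a : Fin (3 * r) ⊕ Fin (s - r)) :
    utility S (a, true) (coverAlloc S S' e π (a, true)) = utility S (a, true) (π (a, true)) := by
  have hA : ∀ v ∈ approved S (a, true), v ∉ origItems s := by
    rcases a with x | m <;> simp +contextual [approved, origItems]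
  unfold utility
  congr 2
  ext v
  simp only [coverAlloc, mem_inter, mem_filter]
  exact ⟨fun h => ⟨h.1.1, h.2⟩, fun h => ⟨⟨h.1, hA v h.2⟩, h.2⟩⟩

end CoverAlloc

theorem utility_eq_of_exactCover {S : Fin s → Fin 3 → Fin (3 * r)}
    (hS : ∀ k, Function.Injective (S k)) {π : Agent r s → Finset (Item s)}
    (hπ : IsConnAlloc (graph s) π) (hPO : ParetoOptimal (graph s) (utility S) π)
    (horig : ∀ a, π (a, false) ⊆ origItems s) {S' : Finset (Fin s)} (hcard : #S' = r)
    (hcov : ∀ x, ∃ k ∈ S', ∃ j, S k j = x) :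
    (∀ x, utility S (Sum.inl x, false) (π (Sum.inl x, false)) = 1) ∧
      (∀ m, utility S (Sum.inr m, false) (π (Sum.inr m, false)) = 3) := by
  have hn : ∀ a, none ∉ π (a, false) := fun a h => none_notMem_origItems (horig a h)
  have h1 : ∀ x, utility S (Sum.inl x, false) (π (Sum.inl x, false)) ≤ 1 := fun x => by
    unfold utility
    exact_mod_cast card_inter_approved_inl_le_one hS (hπ.2.1 _) (hn _) x false
  have h3 : ∀ m, utility S (Sum.inr m, false) (π (Sum.inr m, false)) ≤ 3 := fun m => by
    unfold utility
    exact_mod_cast (card_le_card inter_subset_left).trans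
      (card_le_three_of_connSet (hπ.2.1 _) (hn (Sum.inr m)))
  let e : Fin (s - r) ≃ ↥S'ᶜ :=
    (S'ᶜ.orderIsoOfFin (by rw [card_compl, hcard, Fintype.card_fin])).toEquiv
  by_contra hne
  refine hPO _ (isConnAlloc_coverAlloc e π hcard hcov hπ horig) ⟨?_, ?_⟩
  · rintro ⟨a | m, _ | _⟩
    · exact (h1 a).trans_eq (utility_coverAlloc_inl e π hcard hcov a).symm
    · exact (utility_coverAlloc_true e π _).ge
    · exact (h3 m).trans_eq (utility_coverAlloc_inr e π m).symm
    · exact (utility_coverAlloc_true e π _).ge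
  · simp only [not_and_or, not_forall] at hne
    rcases hne with ⟨x, hx⟩ | ⟨m, hm⟩
    · exact ⟨_, (h1 x).lt_of_ne hx |>.trans_eq (utility_coverAlloc_inl e π hcard hcov x).symm⟩
    · exact ⟨_, (h3 m).lt_of_ne hm |>.trans_eq (utility_coverAlloc_inr e π m).symm⟩

end X3CTree

/-- the X3C tree instance. Items are `Option (Fin s × Bool × Fin 3)`:
`none` is the center `c`, `some (k, false, j)` is the original item
`v_{S_k, j+1}`, and `some (k, true, j)` is its copy `v̂_{S_k, j+1}`. The graph
is the tree formed by the 3-paths `P_{S_k}` and `P̂_{S_k}`, with the center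
adjacent to all middle vertices. Agents are `(Sum.inl x, c)` (agent `i_x` for
`c = false`, its copy `î_x` for `c = true`) and `(Sum.inr k, c)` (dummy `d_k`
and its copy `d̂_k`). For every Pareto-optimal connected allocation `π` whose
original agents receive only original items, the "perfect" utility profile on
the original agents is achieved iff the X3C instance has an exact cover. -/
theorem stmt5 (r s : ℕ) (hrs : r ≤ s)
    (S : Fin s → Fin 3 → Fin (3 * r)) (hS : ∀ k, Function.Injective (S k))
    (G : SimpleGraph (Option (Fin s × Bool × Fin 3)))
    (hG : G = SimpleGraph.fromRel (fun a b =>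
      (∃ (k : Fin s) (c : Bool) (j j' : Fin 3),
          a = some (k, c, j) ∧ b = some (k, c, j') ∧ (j : ℕ) + 1 = (j' : ℕ)) ∨
      (∃ (k : Fin s) (c : Bool), a = none ∧ b = some (k, c, 1))))
    (A : ((Fin (3 * r) ⊕ Fin (s - r)) × Bool) →
      Finset (Option (Fin s × Bool × Fin 3)))
    (hAx : ∀ x c, A (Sum.inl x, c) =
      Finset.univ.filter (fun v => ∃ k j, v = some (k, c, j) ∧ S k j = x))
    (hAd : ∀ k c, A (Sum.inr k, c) =
      Finset.univ.filter (fun v => ∃ k' j, v = some (k', c, j)))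
    (u : ((Fin (3 * r) ⊕ Fin (s - r)) × Bool) →
      Finset (Option (Fin s × Bool × Fin 3)) → ℝ)
    (hu : ∀ i X, u i X = ((X ∩ A i).card : ℝ))
    (π : ((Fin (3 * r) ⊕ Fin (s - r)) × Bool) →
      Finset (Option (Fin s × Bool × Fin 3)))
    (hπ : IsConnAlloc G π) (hPO : ParetoOptimal G u π)
    (horig : ∀ a : Fin (3 * r) ⊕ Fin (s - r), π (a, false) ⊆
      Finset.univ.filter (fun v => ∃ k j, v = some (k, false, j))) :
    ((∀ x, u (Sum.inl x, false) (π (Sum.inl x, false)) = 1) ∧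
     (∀ k, u (Sum.inr k, false) (π (Sum.inr k, false)) = 3)) ↔
    (∃ S' : Finset (Fin s), S'.card = r ∧
      ∀ x : Fin (3 * r), ∃ k ∈ S', ∃ j, S k j = x) := by
  subst hG
  have hA : A = X3CTree.approved S := funext fun
    | (.inl x, c) => hAx x c
    | (.inr m, c) => hAd m c
  have hu' : u = X3CTree.utility S := funext fun i => funext fun X => by
    rw [hu, hA, X3CTree.utility]
  subst hA hu'
  constructor
  · rintro ⟨h1, h3⟩
    exact X3CTree.exists_exactCover_of_utility_eq hrs hπ horig h1 h3
  · rintro ⟨S', hcard, hcov⟩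
    exact X3CTree.utility_eq_of_exactCover hS hπ hPO horig hcard hcov
end

section
/- Let H=(W,E) be a finite simple graph and let k be an integer with 1 ≤ k ≤ |W|. Construct the following allocation instance: the item set is V = W ∪ {c}, and G is the star with center c and leaf set W. The agents are: an agent i whose valuation of each connected bundle Y ⊆ V is u_i(Y) = |{e ∈ E : e ∩ Y ≠ ∅}| (the number of edges of H with at least one endpoint in Y ∩ W); and |W|−k dummy agents d_1,…,d_{|W|−k}, each with valuation u_{d_j}(Y) = 1 if Y ≠ ∅ and u_{d_j}(∅) = 0. Then for every Pareto-optimal connected allocation π of this instance, the following are equivalent: (a) u_i(π(i)) = |E| and u_{d_j}(π(d_j)) = 1 for all j ∈ {1,…,|W|−k}; (b) H has a vertex cover of size k, i.e., a set W' ⊆ W with |W'| = k such that every edge of H has at least one endpoint in W'. -/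
open Finset

section Aux
set_option linter.unusedSectionVars false
variable {W : Type*} [Fintype W] [DecidableEq W]

lemma star_conn_of_none_mem (G : SimpleGraph (Option W))
    (hG : G = SimpleGraph.fromRel (fun a (_ : Option W) => a = none))
    (X : Finset (Option W)) (hX : none ∈ X) : ConnSet G X := by
  have hc : (none : Option W) ∈ (X : Set (Option W)) := by exact_mod_cast hX
  have key : ∀ x : ((X : Set (Option W))),
      (G.induce (X : Set (Option W))).Reachable x ⟨none, hc⟩ := by
    rintro ⟨x, hx⟩
    by_cases hxn : x = none
    · subst hxn; exact SimpleGraph.Reachable.refl _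
    · apply SimpleGraph.Adj.reachable
      show G.Adj x none
      rw [hG]
      simp [SimpleGraph.fromRel_adj, hxn]
  exact fun a b => (key a).trans (key b).symm

lemma conn_singleton {V : Type*} (G : SimpleGraph V) (v : V) :
    ConnSet G ({v} : Finset V) := by
  rintro ⟨a, ha⟩ ⟨b, hb⟩
  simp only [Finset.coe_singleton, Set.mem_singleton_iff] at ha hb
  subst ha; subst hb
  exact SimpleGraph.Reachable.refl _

lemma star_card_le_one (G : SimpleGraph (Option W))
    (hG : G = SimpleGraph.fromRel (fun a (_ : Option W) => a = none))
    (X : Finset (Option W)) (hc : ConnSet G X) (hn : none ∉ X) :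
    X.card ≤ 1 := by
  rw [Finset.card_le_one]
  intro a ha b hb
  have hbot : G.induce (X : Set (Option W)) = ⊥ := by
    ext ⟨x, hx⟩ ⟨y, hy⟩
    simp only [SimpleGraph.comap_adj, SimpleGraph.bot_adj, iff_false]
    intro hadj
    rw [hG, SimpleGraph.fromRel_adj] at hadj
    rcases hadj with ⟨_, h | h⟩
    · rw [show x = none from h] at hx; exact hn (by exact_mod_cast hx)
    · rw [show y = none from h] at hy; exact hn (by exact_mod_cast hy)
  have := hc ⟨a, by exact_mod_cast ha⟩ ⟨b, by exact_mod_cast hb⟩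
  rw [hbot, SimpleGraph.reachable_bot] at this
  exact congrArg Subtype.val this

end Aux

/-- the vertex-cover star instance. Items are `Option W` with
center `c = none` and leaves the vertices of `H`; the graph is the star with
center `none`. Agent `none` is the agent `i`, valuing a bundle by the number
of edges of `H` it covers; agents `some j` are the `|W| − k` dummies, valuing
any nonempty bundle at `1`. For every Pareto-optimal connected allocation `π`,
the "perfect" utility profile is achieved iff `H` has a vertex cover of
size `k`. -/

theorem stmt6 {W : Type*} [Fintype W] [DecidableEq W]
    (H : SimpleGraph W) [DecidableRel H.Adj]
    (k : ℕ) (hk1 : 1 ≤ k) (hk2 : k ≤ Fintype.card W)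
    (G : SimpleGraph (Option W))
    (hG : G = SimpleGraph.fromRel (fun a (_ : Option W) => a = none))
    (u : Option (Fin (Fintype.card W - k)) → Finset (Option W) → ℝ)
    (hui : ∀ Y, u none Y =
      ((H.edgeFinset.filter (fun e => ∃ w ∈ e, some w ∈ Y)).card : ℝ))
    (hud : ∀ j Y, u (some j) Y = if Y = ∅ then 0 else 1)
    (π : Option (Fin (Fintype.card W - k)) → Finset (Option W))
    (hπ : IsConnAlloc G π) (hPO : ParetoOptimal G u π) :
    (u none (π none) = (H.edgeFinset.card : ℝ) ∧
     ∀ j, u (some j) (π (some j)) = 1) ↔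
    (∃ W' : Finset W, W'.card = k ∧
      ∀ e ∈ H.edgeFinset, ∃ w ∈ W', w ∈ e) := by
  obtain ⟨hsub, hconn, hdisj, hcov⟩ := hπ
  constructor
  · rintro ⟨hiu, hju⟩
    have hE : (H.edgeFinset.filter (fun e => ∃ w ∈ e, some w ∈ π none)) = H.edgeFinset := by
      apply Finset.eq_of_subset_of_card_le (Finset.filter_subset _ _)
      have h2 := hiu
      rw [hui] at h2
      exact_mod_cast h2.ge
    have hne : ∀ j, (π (some j)).Nonempty := by
      intro j
      have h3 := hju j
      rw [hud] at h3
      by_contra hemp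
      rw [Finset.not_nonempty_iff_eq_empty] at hemp
      simp [hemp] at h3
    have hcount : Fintype.card W + 1 =
        ∑ i : Option (Fin (Fintype.card W - k)), (π i).card := by
      have hbu : (Finset.univ : Finset (Option (Fin (Fintype.card W - k)))).biUnion π
          = Finset.univ := by
        ext v
        simp only [Finset.mem_biUnion, Finset.mem_univ, true_and, iff_true]
        exact hcov v (Finset.mem_univ v)
      calc Fintype.card W + 1 = (Finset.univ : Finset (Option W)).card := by
            simp
        _ = _ := by
            rw [← hbu, Finset.card_biUnion (fun i _ j _ hij => hdisj i j hij)]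
    rw [Fintype.sum_option] at hcount
    have hsum : (Fintype.card W - k) ≤ ∑ j : Fin (Fintype.card W - k), (π (some j)).card := by
      calc (Fintype.card W - k) = ∑ _j : Fin (Fintype.card W - k), 1 := by simp
        _ ≤ _ := Finset.sum_le_sum (fun j _ => Finset.card_pos.mpr (hne j))
    have hcard : (π none).card ≤ k + 1 := by omega
    set S : Finset W := Finset.univ.filter (fun w => some w ∈ π none) with hS
    have himg : S.image some = (π none).erase none := by
      ext v
      cases v with
      | none => simp
      | some w => simp [hS]
    have hScard : S.card ≤ k := by
      have h1 : S.card = ((π none).erase none).card := by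
        rw [← himg, Finset.card_image_of_injective _ (Option.some_injective W)]
      by_cases hn : none ∈ π none
      · rw [h1, Finset.card_erase_of_mem hn]; omega
      · have h4 := star_card_le_one G hG (π none) (hconn none) hn
        rw [h1, Finset.erase_eq_of_notMem hn]; omega
    obtain ⟨W', hSW', hW'card⟩ :=
      Finset.exists_superset_card_eq hScard (by simpa using hk2)
    refine ⟨W', hW'card, fun e he => ?_⟩
    rw [← hE, Finset.mem_filter] at he
    obtain ⟨_, w, hwe, hwπ⟩ := he
    exact ⟨w, hSW' (by simp [hS, hwπ]), hwe⟩
  · rintro ⟨W', hW'card, hW'cov⟩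
    -- construct the perfect allocation
    have hT : (Finset.univ \ W').card = Fintype.card W - k := by
      rw [Finset.card_sdiff_of_subset (Finset.subset_univ _), Finset.card_univ, hW'card]
    let e : Fin (Fintype.card W - k) ≃ {x // x ∈ Finset.univ \ W'} :=
      (finCongr hT.symm).trans (Finset.univ \ W').equivFin.symm
    set π' : Option (Fin (Fintype.card W - k)) → Finset (Option W) :=
      fun i => match i with
        | none => insert none (W'.image some)
        | some j => {some ((e j : W))} with hπ'
    have heT : ∀ j, ((e j : W)) ∉ W' := by
      intro j
      have := (e j).2
      rw [Finset.mem_sdiff] at this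
      exact this.2
    have halloc : IsConnAlloc G π' := by
      refine ⟨fun i => Finset.subset_univ _, ?_, ?_, ?_⟩
      · intro i
        cases i with
        | none => exact star_conn_of_none_mem G hG _ (Finset.mem_insert_self _ _)
        | some j => exact conn_singleton G _
      · intro i j hij
        match i, j with
        | none, none => exact absurd rfl hij
        | none, some j =>
            rw [Finset.disjoint_singleton_right]
            simp only [hπ', Finset.mem_insert, Finset.mem_image]
            push_neg
            exact ⟨by simp, fun w hw hww => heT j (by rwa [← Option.some_injective W hww])⟩
        | some j, none =>
            rw [Finset.disjoint_singleton_left]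
            simp only [hπ', Finset.mem_insert, Finset.mem_image]
            push_neg
            exact ⟨by simp, fun w hw hww => heT j (by rwa [← Option.some_injective W hww])⟩
        | some j, some j' =>
            rw [Finset.disjoint_singleton_left, Finset.mem_singleton]
            intro hcontra
            apply hij
            have := Option.some_injective W hcontra
            have h5 : e j = e j' := Subtype.ext this
            rw [e.injective h5]
      · intro v _
        cases v with
        | none => exact ⟨none, Finset.mem_insert_self _ _⟩
        | some w =>
            by_cases hw : w ∈ W'
            · exact ⟨none, Finset.mem_insert_of_mem (Finset.mem_image_of_mem _ hw)⟩
            · refine ⟨some (e.symm ⟨w, by simp [hw]⟩), ?_⟩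
              simp [hπ']
    have hub_i : ∀ Y, u none Y ≤ (H.edgeFinset.card : ℝ) := by
      intro Y
      rw [hui]
      exact_mod_cast Finset.card_le_card (Finset.filter_subset _ _)
    have hub_d : ∀ j Y, u (some j) Y ≤ 1 := by
      intro j Y
      rw [hud]
      split <;> norm_num
    have hπ'i : u none (π' none) = (H.edgeFinset.card : ℝ) := by
      rw [hui]
      congr 2
      apply Finset.filter_true_of_mem
      intro ed hed
      obtain ⟨w, hwW', hwe⟩ := hW'cov ed hed
      exact ⟨w, hwe, Finset.mem_insert_of_mem (Finset.mem_image_of_mem _ hwW')⟩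
    have hπ'd : ∀ j, u (some j) (π' (some j)) = 1 := by
      intro j
      rw [hud]
      simp [hπ']
    by_contra hcon
    apply hPO π' halloc
    constructor
    · intro i
      cases i with
      | none => rw [hπ'i]; exact hub_i _
      | some j => rw [hπ'd]; exact hub_d _ _
    · rcases not_and_or.mp hcon with h | h
      · exact ⟨none, by rw [hπ'i]; exact lt_of_le_of_ne (hub_i _) h⟩
      · push_neg at h
        obtain ⟨j, hj⟩ := h
        exact ⟨some j, by rw [hπ'd]; exact lt_of_le_of_ne (hub_d j _) hj⟩
end

section
/- When G is a path and all agents have identical additive valuations with nonnegative item values (u_i = u for all i, where u is additive and u({v}) ≥ 0 for every item v), there exists a connected allocation that is both EF1 and Pareto-optimal. -/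
open Finset

/-!
With one additive valuation every connected allocation has total utility the sum of all item
values, so every connected allocation is Pareto-optimal. It therefore suffices to cut the path into
`n` intervals such that, for some threshold `t`, every interval is worth at least `t`, and at most
`t` once one of its end items is dropped: then nobody envies a bundle after that item is removed.

Take for `t` the maximin value of the path. By definition some split has all pieces worth at
least `t`. Some split also has all trimmed pieces worth at most `t`: cut the first piece right
after the last position up to which it is worth no more than the maximin value of the rest, and
recurse. The two splits are then merged from the left, one cut at a time.
-/

section Allocation

variable {V N : Type*} [Fintype V] [DecidableEq V] {G : SimpleGraph V} {u : Finset V → ℝ}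
  {π : N → Finset V}

lemma IsConnAlloc.sum_eq [Fintype N] {w : V → ℝ} (hu : ∀ X, ConnSet G X → u X = ∑ v ∈ X, w v)
    (hπ : IsConnAlloc G π) : ∑ i, u (π i) = ∑ v, w v := by
  obtain ⟨-, hconn, hdisj, hcov⟩ := hπ
  have hunion : univ.biUnion π = univ := eq_univ_of_forall fun v =>
    let ⟨i, hi⟩ := hcov v (mem_univ v); mem_biUnion.mpr ⟨i, mem_univ i, hi⟩
  rw [← hunion, sum_biUnion fun i _ j _ hij => hdisj i j hij]
  exact sum_congr rfl fun i _ => hu _ (hconn i)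

theorem IsConnAlloc.paretoOptimal [Fintype N] {w : V → ℝ}
    (hu : ∀ X, ConnSet G X → u X = ∑ v ∈ X, w v) (hπ : IsConnAlloc G π) :
    ParetoOptimal G (fun _ => u) π := by
  rintro π' hπ' ⟨hle, i, hlt⟩
  have := sum_lt_sum (fun j _ => hle j) ⟨i, mem_univ i, hlt⟩
  rw [hπ.sum_eq hu, hπ'.sum_eq hu] at this
  exact lt_irrefl _ this

lemma EF1.of_threshold (t : ℝ) (hge : ∀ i, t ≤ u (π i))
    (htrim : ∀ j, u (π j) ≤ t ∨ ∃ v ∈ π j, ConnSet G ((π j).erase v) ∧ u ((π j).erase v) ≤ t) :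
    EF1 G (fun _ => u) π := fun i j =>
  (htrim j).imp (·.trans (hge i)) fun ⟨v, hv, hconn, hle⟩ => ⟨v, hv, hconn, hle.trans (hge i)⟩

end Allocation

namespace PathEF1

noncomputable def icoSum (W : ℕ → ℝ) (a b : ℕ) : ℝ := ∑ k ∈ Ico a b, W k

def TrimLE (W : ℕ → ℝ) (t : ℝ) (a b : ℕ) : Prop :=
  icoSum W a (b - 1) ≤ t ∨ icoSum W (a + 1) b ≤ t

def Splits (P : ℕ → ℕ → Prop) : ℕ → ℕ → ℕ → Prop
  | 0, a, b => a = b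
  | k + 1, a, b => ∃ c, a ≤ c ∧ c ≤ b ∧ P a c ∧ Splits P k c b

section icoSum

variable {W : ℕ → ℝ}

lemma icoSum_nonneg (hW : ∀ k, 0 ≤ W k) (a b : ℕ) : 0 ≤ icoSum W a b :=
  sum_nonneg fun k _ => hW k

lemma icoSum_le_icoSum (hW : ∀ k, 0 ≤ W k) {a a' b b' : ℕ} (ha : a ≤ a') (hb : b' ≤ b) :
    icoSum W a' b' ≤ icoSum W a b :=
  sum_le_sum_of_subset_of_nonneg (Ico_subset_Ico ha hb) fun k _ _ => hW k

lemma icoSum_of_le {a b : ℕ} (h : b ≤ a) : icoSum W a b = 0 := by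
  simp [icoSum, Ico_eq_empty_of_le h]

end icoSum

namespace TrimLE

variable {W : ℕ → ℝ} {t : ℝ} {a b : ℕ}

lemma of_icoSum_le (hW : ∀ k, 0 ≤ W k) (h : icoSum W a b ≤ t) : TrimLE W t a b :=
  .inl ((icoSum_le_icoSum hW le_rfl (Nat.sub_le b 1)).trans h)

lemma self (ht : 0 ≤ t) (a : ℕ) : TrimLE W t a a :=
  .inr (by rw [icoSum_of_le (Nat.le_succ a)]; exact ht)

lemma mono {t' : ℝ} (h : TrimLE W t a b) (ht : t ≤ t') : TrimLE W t' a b :=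
  h.imp (·.trans ht) (·.trans ht)

lemma subinterval (hW : ∀ k, 0 ≤ W k) (h : TrimLE W t a b) {a' b' : ℕ} (ha : a ≤ a')
    (hb : b' ≤ b) : TrimLE W t a' b' :=
  h.imp (le_trans (icoSum_le_icoSum hW ha (by omega)))
    (le_trans (icoSum_le_icoSum hW (by omega) hb))

end TrimLE

namespace Splits

variable {P Q : ℕ → ℕ → Prop}

lemma le : ∀ {k a b : ℕ}, Splits P k a b → a ≤ b
  | 0, _, _, h => Nat.le_of_eq h
  | _ + 1, _, _, ⟨_, hac, _, _, h⟩ => hac.trans h.le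

lemma mono (hPQ : ∀ a c, P a c → Q a c) : ∀ {k a b : ℕ}, Splits P k a b → Splits Q k a b
  | 0, _, _, h => h
  | _ + 1, a, _, ⟨c, hac, hcb, hP, h⟩ => ⟨c, hac, hcb, hPQ a c hP, mono hPQ h⟩

lemma self (hP : ∀ a, P a a) : ∀ k b, Splits P k b b
  | 0, _ => rfl
  | k + 1, b => ⟨b, le_rfl, le_rfl, hP b, self hP k b⟩

lemma extend_left (hP : ∀ a' a c, a' ≤ a → P a c → P a' c) {k a a' b : ℕ} (hk : k ≠ 0)
    (ha : a' ≤ a) (h : Splits P k a b) : Splits P k a' b := by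
  obtain ⟨k, rfl⟩ := Nat.exists_eq_succ_of_ne_zero hk
  obtain ⟨c, hac, hcb, hP', h⟩ := h
  exact ⟨c, ha.trans hac, hcb, hP a' a c ha hP', h⟩

lemma shrink_left (hP : ∀ a a' c, a ≤ a' → P a c → P a' c) (hP' : ∀ a, P a a) :
    ∀ {k a a' b : ℕ}, a ≤ a' → a' ≤ b → Splits P k a b → Splits P k a' b
  | 0, _, _, _, ha, hb, h => by simp only [Splits] at h ⊢; omega
  | _ + 1, a, a', _, ha, hb, ⟨c, _, hcb, hac, h⟩ => by
    rcases le_total a' c with hc | hc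
    · exact ⟨c, hc, hcb, hP a a' c ha hac, h⟩
    · exact ⟨a', le_rfl, hb, hP' a', shrink_left hP hP' hc hb h⟩

lemma exists_cuts : ∀ {k a b : ℕ}, Splits P k a b →
    ∃ g : ℕ → ℕ, g 0 = a ∧ Monotone g ∧ g k = b ∧ ∀ j < k, P (g j) (g (j + 1))
  | 0, a, _, h => ⟨fun _ => a, rfl, monotone_const, h, fun _ hj => absurd hj (Nat.not_lt_zero _)⟩
  | k + 1, a, _, ⟨c, hac, _, hP, h⟩ => by
    obtain ⟨g, hg0, hg, hgk, hgP⟩ := exists_cuts h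
    refine ⟨Nat.rec a fun j _ => g j, rfl, monotone_nat_of_le_succ ?_, hgk, ?_⟩
    · rintro (_ | j)
      · exact hac.trans_eq hg0.symm
      · exact hg j.le_succ
    · rintro (_ | j) hj
      · show P a (g 0)
        exact hg0 ▸ hP
      · exact hgP j (by omega)

end Splits

section Threshold

variable {W : ℕ → ℝ} {t : ℝ}

/-- A first piece worth at most `t` stays trimmed when item `p` is prepended; a first piece worth
more than `t` is kept, and the rest is handled by induction. -/
lemma splits_trimLE_pred_or_splits_ge (hW : ∀ k, 0 ≤ W k) (ht : 0 ≤ t) :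
    ∀ k p b, Splits (TrimLE W t) k (p + 1) b →
      Splits (TrimLE W t) k p b ∨ Splits (fun a c => t ≤ icoSum W a c) k (p + 1) b := by
  intro k
  induction k with
  | zero => exact fun p b h => .inr h
  | succ k ih =>
    rintro p b ⟨q, hpq, hqb, hfirst, hrest⟩
    induction q using Nat.strong_induction_on with
    | _ q IH =>
      by_cases hle : icoSum W (p + 1) q ≤ t
      · exact .inl ⟨q, by omega, hqb, .inr hle, hrest⟩
      replace hle := not_le.mp hle
      have hpq' : p + 1 < q := by
        by_contra! hq
        rw [icoSum_of_le hq] at hle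
        linarith
      obtain ⟨q, rfl⟩ : ∃ q', q = q' + 1 := ⟨q - 1, by omega⟩
      rcases ih q b hrest with h | h
      · exact IH q (by omega) (by omega) (by omega) (hfirst.subinterval hW le_rfl q.le_succ) h
      · exact .inr ⟨q + 1, hpq, hqb, hle.le, h⟩

/-- Cut at the first position `c`, not left of the leftmost first cut `d` of a trimmed split,
where the first piece reaches value `t`. The rightmost first cut `ρ` of a split into pieces of
value `≥ t` satisfies `d ≤ ρ` (otherwise `splits_trimLE_pred_or_splits_ge` would move `d` left or
`ρ` right), hence `c ≤ ρ`, and both splits survive on `[c, b)`. -/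
lemma exists_balanced_first_cut (hW : ∀ k, 0 ≤ W k) (ht : 0 ≤ t) {k a b : ℕ}
    (hge : Splits (fun a c => t ≤ icoSum W a c) (k + 1) a b)
    (htrim : Splits (TrimLE W t) (k + 1) a b) :
    ∃ c, a ≤ c ∧ c ≤ b ∧ t ≤ icoSum W a c ∧ TrimLE W t a c ∧
      Splits (fun a c => t ≤ icoSum W a c) k c b ∧ Splits (TrimLE W t) k c b := by
  classical
  rcases Nat.eq_zero_or_pos k with rfl | hk
  · obtain ⟨c, hac, -, hc, rfl : c = b⟩ := hge
    obtain ⟨d, -, -, hd, rfl : d = c⟩ := htrim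
    exact ⟨d, hac, le_rfl, hc, hd, rfl, rfl⟩
  obtain ⟨c₀, hac₀, hc₀b, hc₀⟩ := hge
  set ρ := Nat.findGreatest
    (fun c => t ≤ icoSum W a c ∧ Splits (fun a c => t ≤ icoSum W a c) k c b) b
  have hρ : t ≤ icoSum W a ρ ∧ Splits (fun a c => t ≤ icoSum W a c) k ρ b :=
    Nat.findGreatest_spec (P := fun c => t ≤ icoSum W a c ∧ Splits _ k c b) hc₀b hc₀
  have hc₀ρ : c₀ ≤ ρ := Nat.le_findGreatest hc₀b hc₀
  have hρb : ρ ≤ b := Nat.findGreatest_le b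
  have hdex : ∃ d, a ≤ d ∧ TrimLE W t a d ∧ Splits (TrimLE W t) k d b :=
    let ⟨d, had, _, hd, h⟩ := htrim; ⟨d, had, hd, h⟩
  set d := Nat.find hdex
  obtain ⟨had, hd, hdsplit⟩ : a ≤ d ∧ TrimLE W t a d ∧ Splits (TrimLE W t) k d b :=
    Nat.find_spec hdex
  have hdρ : d ≤ ρ := by
    by_contra! hρd
    obtain ⟨d', hd'⟩ : ∃ d', d = d' + 1 := ⟨d - 1, by omega⟩
    rw [hd'] at hdsplit
    rcases splits_trimLE_pred_or_splits_ge hW ht k d' b hdsplit with h | h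
    · have := Nat.find_min' hdex ⟨(by omega : a ≤ d'), hd.subinterval hW le_rfl (by omega), h⟩
      omega
    · have := Nat.le_findGreatest (P := fun c => t ≤ icoSum W a c ∧ Splits _ k c b) hdsplit.le
        ⟨hρ.1.trans (icoSum_le_icoSum hW le_rfl (by omega)), h⟩
      omega
  have hcex : ∃ c, d ≤ c ∧ t ≤ icoSum W a c := ⟨ρ, hdρ, hρ.1⟩
  set c := Nat.find hcex
  obtain ⟨hdc, hc⟩ : d ≤ c ∧ t ≤ icoSum W a c := Nat.find_spec hcex
  have hcρ : c ≤ ρ := Nat.find_min' hcex ⟨hdρ, hρ.1⟩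
  refine ⟨c, had.trans hdc, hcρ.trans hρb, hc, ?_, ?_, ?_⟩
  · rcases hdc.eq_or_lt with hdc | hdc
    · rwa [← hdc]
    · exact .inl (not_le.mp fun h => Nat.find_min hcex (by omega : c - 1 < c) ⟨by omega, h⟩).le
  · exact hρ.2.extend_left (fun a' a c h h' => h'.trans (icoSum_le_icoSum hW h le_rfl))
      hk.ne' hcρ
  · exact hdsplit.shrink_left (fun a a' c h h' => h'.subinterval hW h le_rfl) (TrimLE.self ht)
      hdc (hcρ.trans hρb)

theorem splits_balanced (hW : ∀ k, 0 ≤ W k) (ht : 0 ≤ t) : ∀ {k a b : ℕ},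
    Splits (fun a c => t ≤ icoSum W a c) k a b → Splits (TrimLE W t) k a b →
      Splits (fun a c => t ≤ icoSum W a c ∧ TrimLE W t a c) k a b
  | 0, _, _, h, _ => h
  | _ + 1, _, _, hge, htrim => by
    obtain ⟨c, hac, hcb, hc, hcT, hge', htrim'⟩ := exists_balanced_first_cut hW ht hge htrim
    exact ⟨c, hac, hcb, ⟨hc, hcT⟩, splits_balanced hW ht hge' htrim'⟩

/-- The largest `t` for which `[a, b)` splits into `n` intervals of value at least `t`; the
first cut ranges over `[a, max a b]` only so that this range is never empty. -/
noncomputable def maxMin (W : ℕ → ℝ) : ℕ → ℕ → ℕ → ℝ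
  | 0, _, _ => 0
  | 1, a, b => icoSum W a b
  | n + 2, a, b => (Icc a (max a b)).sup' (nonempty_Icc.mpr (le_max_left a b))
      fun c => min (icoSum W a c) (maxMin W (n + 1) c b)

lemma min_le_maxMin {n a b c : ℕ} (hac : a ≤ c) (hcb : c ≤ b) :
    min (icoSum W a c) (maxMin W (n + 1) c b) ≤ maxMin W (n + 2) a b :=
  le_sup' (fun c => min (icoSum W a c) (maxMin W (n + 1) c b))
    (mem_Icc.mpr ⟨hac, hcb.trans (le_max_right a b)⟩)

lemma exists_maxMin_eq {n a b : ℕ} (hab : a ≤ b) :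
    ∃ c, a ≤ c ∧ c ≤ b ∧ maxMin W (n + 2) a b = min (icoSum W a c) (maxMin W (n + 1) c b) := by
  obtain ⟨c, hc, h⟩ := exists_mem_eq_sup' (nonempty_Icc.mpr (le_max_left a b))
    fun c => min (icoSum W a c) (maxMin W (n + 1) c b)
  rw [mem_Icc, max_eq_right hab] at hc
  exact ⟨c, hc.1, hc.2, h⟩

lemma maxMin_nonneg (hW : ∀ k, 0 ≤ W k) : ∀ n {a b : ℕ}, a ≤ b → 0 ≤ maxMin W (n + 1) a b
  | 0, a, b, _ => icoSum_nonneg hW a b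
  | n + 1, a, _, hab => by
    refine le_trans ?_ (min_le_maxMin le_rfl hab)
    rw [icoSum_of_le le_rfl]
    exact le_min le_rfl (maxMin_nonneg hW n hab)

lemma splits_ge_maxMin : ∀ n {a b : ℕ}, a ≤ b →
    Splits (fun x y => maxMin W (n + 1) a b ≤ icoSum W x y) (n + 1) a b
  | 0, _, b, hab => ⟨b, hab, le_rfl, le_rfl, rfl⟩
  | n + 1, _, _, hab => by
    obtain ⟨c, hac, hcb, h⟩ := exists_maxMin_eq hab
    exact ⟨c, hac, hcb, h ▸ min_le_left _ _,
      (splits_ge_maxMin n hcb).mono fun x y hxy => (h ▸ min_le_right _ _).trans hxy⟩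

lemma splits_trimLE_maxMin (hW : ∀ k, 0 ≤ W k) : ∀ n {a b : ℕ}, a ≤ b →
    Splits (TrimLE W (maxMin W (n + 1) a b)) (n + 1) a b
  | 0, _, b, hab => ⟨b, hab, le_rfl, TrimLE.of_icoSum_le hW le_rfl, rfl⟩
  | n + 1, a, b, hab => by
    classical
    set t := maxMin W (n + 2) a b
    have ht : 0 ≤ t := maxMin_nonneg hW (n + 1) hab
    set P := fun c => icoSum W a c ≤ maxMin W (n + 1) c b
    set cs := Nat.findGreatest P b
    have hPa : P a := by
      simp only [P]
      rw [icoSum_of_le le_rfl]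
      exact maxMin_nonneg hW n hab
    have hacs : a ≤ cs := Nat.le_findGreatest hab hPa
    have hcsb : cs ≤ b := Nat.findGreatest_le b
    have hcs : icoSum W a cs ≤ t := by
      have := min_le_maxMin (W := W) (n := n) hacs hcsb
      rwa [min_eq_left (Nat.findGreatest_spec (P := P) hab hPa)] at this
    rcases hcsb.eq_or_lt with hcsb | hcsb
    · rw [hcsb] at hcs
      exact ⟨b, hab, le_rfl, TrimLE.of_icoSum_le hW hcs, Splits.self (TrimLE.self ht) (n + 1) b⟩
    have hnext : maxMin W (n + 1) (cs + 1) b < icoSum W a (cs + 1) :=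
      not_le.mp (Nat.findGreatest_is_greatest (Nat.lt_succ_self cs) hcsb)
    have hrest : maxMin W (n + 1) (cs + 1) b ≤ t := by
      have := min_le_maxMin (W := W) (n := n) (hacs.trans cs.le_succ) hcsb
      rwa [min_eq_right hnext.le] at this
    exact ⟨cs + 1, by omega, hcsb, .inl (by simpa using hcs),
      (splits_trimLE_maxMin hW n (Nat.succ_le_of_lt hcsb)).mono fun x y h => h.mono hrest⟩

theorem exists_balanced_splits (hW : ∀ k, 0 ≤ W k) (n : ℕ) {a b : ℕ} (hab : a ≤ b) :
    ∃ t, Splits (fun x y => t ≤ icoSum W x y ∧ TrimLE W t x y) (n + 1) a b :=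
  ⟨_, splits_balanced hW (maxMin_nonneg hW n hab) (splits_ge_maxMin n hab)
    (splits_trimLE_maxMin hW n hab)⟩

end Threshold

section Path

open SimpleGraph

def pathIco (m lo hi : ℕ) : Finset (Fin m) := {v | lo ≤ v.val ∧ v.val < hi}

def zeroExtend {m : ℕ} (w : Fin m → ℝ) (k : ℕ) : ℝ := if h : k < m then w ⟨k, h⟩ else 0

variable {m lo hi : ℕ}

@[simp] lemma mem_pathIco {v : Fin m} : v ∈ pathIco m lo hi ↔ lo ≤ v.val ∧ v.val < hi := by
  simp [pathIco]

lemma connSet_pathIco (hhi : hi ≤ m) : ConnSet (pathGraph m) (pathIco m lo hi) := by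
  refine (pathGraph_preconnected (hi - lo)).map
    ⟨fun i : Fin (hi - lo) => ⟨⟨lo + i, by have := i.2; omega⟩, by have := i.2; simp; omega⟩,
      fun {i j} h => ?_⟩ ?_
  · simp only [pathGraph_adj, comap_adj, Function.Embedding.coe_subtype] at h ⊢
    omega
  · rintro ⟨v, hv⟩
    rw [Finset.mem_coe, mem_pathIco] at hv
    exact ⟨⟨v - lo, by omega⟩, by ext; simp; omega⟩

lemma pathIco_erase_left (h : lo < m) :
    (pathIco m lo hi).erase ⟨lo, h⟩ = pathIco m (lo + 1) hi := by
  ext v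
  simp only [mem_erase, mem_pathIco, ne_eq, Fin.ext_iff]
  omega

lemma pathIco_erase_right (h : hi - 1 < m) :
    (pathIco m lo hi).erase ⟨hi - 1, h⟩ = pathIco m lo (hi - 1) := by
  ext v
  simp only [mem_erase, mem_pathIco, ne_eq, Fin.ext_iff]
  omega

lemma sum_pathIco (w : Fin m → ℝ) (lo hi : ℕ) :
    ∑ v ∈ pathIco m lo hi, w v = icoSum (zeroExtend w) lo hi := by
  have hterm : ∀ v : Fin m, (if lo ≤ v.val ∧ v.val < hi then w v else 0) =
      if v.val ∈ Ico lo hi then zeroExtend w v else 0 := fun v => by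
    simp [zeroExtend, v.isLt]
  rw [pathIco, sum_filter, sum_congr rfl fun v _ => hterm v,
    Fin.sum_univ_eq_sum_range (fun k => if k ∈ Ico lo hi then zeroExtend w k else 0),
    ← sum_filter, icoSum]
  refine sum_subset (fun k hk => (mem_filter.mp hk).2) fun k hk hk' => ?_
  simp only [mem_filter, mem_range, hk, and_true] at hk'
  simp [zeroExtend, hk']

variable {w : Fin m → ℝ} {u : Finset (Fin m) → ℝ}

lemma apply_pathIco (hu : ∀ X, ConnSet (pathGraph m) X → u X = ∑ v ∈ X, w v) (hhi : hi ≤ m) :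
    u (pathIco m lo hi) = icoSum (zeroExtend w) lo hi := by
  rw [hu _ (connSet_pathIco hhi), sum_pathIco]

lemma exists_erase_le_of_trimLE (hu : ∀ X, ConnSet (pathGraph m) X → u X = ∑ v ∈ X, w v)
    {t : ℝ} (hhi : hi ≤ m) (h : TrimLE (zeroExtend w) t lo hi) :
    u (pathIco m lo hi) ≤ t ∨ ∃ v ∈ pathIco m lo hi,
      ConnSet (pathGraph m) ((pathIco m lo hi).erase v) ∧ u ((pathIco m lo hi).erase v) ≤ t := by
  rw [apply_pathIco hu hhi]
  rcases le_or_gt hi lo with hle | hlt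
  · refine .inl ?_
    rw [icoSum_of_le hle]
    rcases h with h | h <;> rwa [icoSum_of_le (by omega)] at h
  refine .inr ?_
  rcases h with h | h
  · refine ⟨⟨hi - 1, by omega⟩,
      mem_pathIco.mpr ⟨(by omega : lo ≤ hi - 1), (by omega : hi - 1 < hi)⟩, ?_⟩
    rw [pathIco_erase_right, apply_pathIco hu (by omega)]
    exact ⟨connSet_pathIco (by omega), h⟩
  · refine ⟨⟨lo, by omega⟩, mem_pathIco.mpr ⟨le_rfl, hlt⟩, ?_⟩
    rw [pathIco_erase_left, apply_pathIco hu hhi]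
    exact ⟨connSet_pathIco hhi, h⟩

lemma isConnAlloc_pathIco {N : Type*} {n : ℕ} (e : N ≃ Fin n) {g : ℕ → ℕ} (hg : Monotone g)
    (hg0 : g 0 = 0) (hgn : g n = m) :
    IsConnAlloc (pathGraph m) fun i => pathIco m (g (e i)) (g (e i + 1)) := by
  classical
  refine ⟨fun i => subset_univ _, fun i => connSet_pathIco (hgn ▸ hg (e i).isLt),
    fun i j hij => ?_, fun v _ => ?_⟩
  · have hne : (e i : ℕ) ≠ e j := fun h => hij (e.injective (Fin.ext h))
    refine disjoint_left.mpr fun v hvi hvj => ?_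
    rw [mem_pathIco] at hvi hvj
    rcases lt_or_gt_of_ne hne with h | h
    · have := hg (show (e i : ℕ) + 1 ≤ e j from h); omega
    · have := hg (show (e j : ℕ) + 1 ≤ e i from h); omega
  · -- `v` lies in the bundle ending at the first cut beyond it
    have hex : ∃ j, (v : ℕ) < g j := ⟨n, hgn ▸ v.isLt⟩
    set j := Nat.find hex
    have hvj : (v : ℕ) < g j := Nat.find_spec hex
    have hjn : j ≤ n := Nat.find_min' hex (hgn ▸ v.isLt)
    have hj0 : j ≠ 0 := fun h => by rw [h, hg0] at hvj; omega
    have hprev : ¬ (v : ℕ) < g (j - 1) := Nat.find_min hex (by omega)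
    refine ⟨e.symm ⟨j - 1, by omega⟩, ?_⟩
    simp only [Equiv.apply_symm_apply]
    rw [mem_pathIco, Nat.sub_add_cancel (Nat.pos_of_ne_zero hj0)]
    exact ⟨not_lt.mp hprev, hvj⟩

end Path

end PathEF1

open PathEF1 in
/-- On a path with identical additive valuations with
nonnegative item values, there is a connected allocation that is both EF1 and
Pareto-optimal. -/
theorem stmt12 {m : ℕ} {N : Type*} [Fintype N] [Nonempty N]
    (w : Fin m → ℝ) (hw : ∀ v, 0 ≤ w v)
    (u : Finset (Fin m) → ℝ)
    (hu : ∀ X, ConnSet (SimpleGraph.pathGraph m) X → u X = ∑ v ∈ X, w v) :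
    ∃ π : N → Finset (Fin m),
      IsConnAlloc (SimpleGraph.pathGraph m) π ∧
      EF1 (SimpleGraph.pathGraph m) (fun _ => u) π ∧
      ParetoOptimal (SimpleGraph.pathGraph m) (fun _ => u) π := by
  have hW : ∀ k, 0 ≤ zeroExtend w k := fun k => by
    unfold zeroExtend
    split_ifs
    exacts [hw _, le_rfl]
  obtain ⟨n, hn⟩ := Nat.exists_eq_succ_of_ne_zero (Fintype.card_ne_zero (α := N))
  let e := (Fintype.equivFin N).trans (finCongr hn)
  obtain ⟨t, hsplit⟩ := exists_balanced_splits hW n (Nat.zero_le m)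
  obtain ⟨g, hg0, hg, hgn, hbundle⟩ := hsplit.exists_cuts
  have hgm : ∀ i, g (e i + 1) ≤ m := fun i => hgn ▸ hg (e i).isLt
  have hπ := isConnAlloc_pathIco e hg hg0 hgn
  refine ⟨_, hπ, EF1.of_threshold t (fun i => ?_) (fun j => ?_), hπ.paretoOptimal hu⟩
  · rw [apply_pathIco hu (hgm i)]
    exact (hbundle _ (e i).isLt).1
  · exact exists_erase_le_of_trimLE hu (hgm j) (hbundle _ (e j).isLt).2
end

section
/- Consider the instance where G is the path (a, b, c, d) on four items and there are two agents with the identical (non-additive) valuation u on connected bundles given by: u(∅)=0, u({a})=2, u({b})=2, u({c})=2, u({d})=1, u({a,b})=2, u({b,c})=3, u({c,d})=3, u({a,b,c})=3, u({b,c,d})=4, u({a,b,c,d})=4. Then no connected allocation of this instance is both Pareto-optimal and EF1. -/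
open Finset

/- ## Auxiliary lemmas -/

instance pathAdjDec {n} : DecidableRel (SimpleGraph.pathGraph n).Adj := fun a b =>
  decidable_of_iff _ SimpleGraph.pathGraph_adj.symm

lemma walk_invariant {X : Finset (Fin 4)} (k : ℕ)
    (hgap : ∀ a b : Fin 4, a ∈ X → b ∈ X → (SimpleGraph.pathGraph 4).Adj a b →
      ((a : ℕ) ≤ k ↔ (b : ℕ) ≤ k))
    {x y : (X : Set (Fin 4))}
    (w : ((SimpleGraph.pathGraph 4).induce (X : Set (Fin 4))).Walk x y) :
    (((x : Fin 4) : ℕ) ≤ k ↔ ((y : Fin 4) : ℕ) ≤ k) := by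
  induction w with
  | nil => exact Iff.rfl
  | @cons a b c h p ih =>
      have ha : (a : Fin 4) ∈ X := Finset.mem_coe.mp a.2
      have hb : (b : Fin 4) ∈ X := Finset.mem_coe.mp b.2
      have hadj : (SimpleGraph.pathGraph 4).Adj a b := h
      exact (hgap _ _ ha hb hadj).trans ih

lemma not_connSet {X : Finset (Fin 4)} (k : ℕ) (x y : Fin 4)
    (hx : x ∈ X) (hy : y ∈ X) (hxk : (x : ℕ) ≤ k) (hyk : k < (y : ℕ))
    (hgap : ∀ a b : Fin 4, a ∈ X → b ∈ X → (SimpleGraph.pathGraph 4).Adj a b →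
      ((a : ℕ) ≤ k ↔ (b : ℕ) ≤ k)) :
    ¬ ConnSet (SimpleGraph.pathGraph 4) X := by
  intro h
  obtain ⟨w⟩ := h ⟨x, Finset.mem_coe.mpr hx⟩ ⟨y, Finset.mem_coe.mpr hy⟩
  have h2 : (y : ℕ) ≤ k := (walk_invariant k hgap w).mp hxk
  omega

lemma nc02 : ¬ ConnSet (SimpleGraph.pathGraph 4) {0,2} :=
  not_connSet 0 0 2 (by decide) (by decide) (by decide) (by decide) (by decide)
lemma nc03 : ¬ ConnSet (SimpleGraph.pathGraph 4) {0,3} :=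
  not_connSet 0 0 3 (by decide) (by decide) (by decide) (by decide) (by decide)
lemma nc13 : ¬ ConnSet (SimpleGraph.pathGraph 4) {1,3} :=
  not_connSet 1 1 3 (by decide) (by decide) (by decide) (by decide) (by decide)
lemma nc013 : ¬ ConnSet (SimpleGraph.pathGraph 4) {0,1,3} :=
  not_connSet 1 1 3 (by decide) (by decide) (by decide) (by decide) (by decide)
lemma nc023 : ¬ ConnSet (SimpleGraph.pathGraph 4) {0,2,3} :=
  not_connSet 0 0 3 (by decide) (by decide) (by decide) (by decide) (by decide)

lemma conn_single (v : Fin 4) : ConnSet (SimpleGraph.pathGraph 4) {v} := by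
  intro x y
  have hx : (x : Fin 4) = v := by have := x.2; simpa using this
  have hy : (y : Fin 4) = v := by have := y.2; simpa using this
  have : x = y := Subtype.ext (hx.trans hy.symm)
  rw [this]

lemma conn123 : ConnSet (SimpleGraph.pathGraph 4) {1,2,3} := by
  have h2 : (2 : Fin 4) ∈ (({1,2,3} : Finset (Fin 4)) : Set (Fin 4)) := by simp
  have to2 : ∀ z : (({1,2,3} : Finset (Fin 4)) : Set (Fin 4)),
      ((SimpleGraph.pathGraph 4).induce _).Reachable z ⟨2, h2⟩ := by
    intro z
    have hz : (z : Fin 4) = 1 ∨ (z : Fin 4) = 2 ∨ (z : Fin 4) = 3 := by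
      have := z.2; simpa using this
    rcases hz with h | h | h
    · have : z = ⟨1, by simp⟩ := Subtype.ext h
      rw [this]
      exact SimpleGraph.Adj.reachable (by
        show (SimpleGraph.pathGraph 4).Adj 1 2
        rw [SimpleGraph.pathGraph_adj]; decide)
    · have : z = ⟨2, h2⟩ := Subtype.ext h
      rw [this]
    · have : z = ⟨3, by simp⟩ := Subtype.ext h
      rw [this]
      exact SimpleGraph.Adj.reachable (by
        show (SimpleGraph.pathGraph 4).Adj 3 2
        rw [SimpleGraph.pathGraph_adj]; decide)
  intro x y
  exact (to2 x).trans (to2 y).symm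

lemma alloc1 : IsConnAlloc (SimpleGraph.pathGraph 4)
    (![{0}, {1,2,3}] : Fin 2 → Finset (Fin 4)) := by
  refine ⟨fun i => Finset.subset_univ _, fun i => ?_, fun i j hij => ?_, fun v _ => ?_⟩
  · fin_cases i
    · exact conn_single 0
    · exact conn123
  · fin_cases i <;> fin_cases j <;> simp_all <;> decide
  · fin_cases v
    · exact ⟨0, by decide⟩
    · exact ⟨1, by decide⟩
    · exact ⟨1, by decide⟩
    · exact ⟨1, by decide⟩

lemma alloc2 : IsConnAlloc (SimpleGraph.pathGraph 4)
    (![{1,2,3}, {0}] : Fin 2 → Finset (Fin 4)) := by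
  refine ⟨fun i => Finset.subset_univ _, fun i => ?_, fun i j hij => ?_, fun v _ => ?_⟩
  · fin_cases i
    · exact conn123
    · exact conn_single 0
  · fin_cases i <;> fin_cases j <;> simp_all <;> decide
  · fin_cases v
    · exact ⟨1, by decide⟩
    · exact ⟨0, by decide⟩
    · exact ⟨0, by decide⟩
    · exact ⟨0, by decide⟩

/-- EF1 fails when one agent has ∅ and the other has everything. -/
lemma ef1fail_full (u : Finset (Fin 4) → ℝ)
    (h0 : u ∅ = 0) (habc : u {0,1,2} = 3) (hbcd : u {1,2,3} = 4)
    (habcd : u {0,1,2,3} = 4)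
    (h : u ({0,1,2,3} : Finset (Fin 4)) ≤ u ∅ ∨
      ∃ v ∈ ({0,1,2,3} : Finset (Fin 4)),
        ConnSet (SimpleGraph.pathGraph 4) (({0,1,2,3} : Finset (Fin 4)).erase v) ∧
        u (({0,1,2,3} : Finset (Fin 4)).erase v) ≤ u ∅) : False := by
  rcases h with h | ⟨v, hv, hcv, hle⟩
  · rw [habcd, h0] at h; linarith
  · fin_cases hv
    · rw [show ({0,1,2,3} : Finset (Fin 4)).erase 0 = {1,2,3} from by decide,
        hbcd] at hle
      rw [h0] at hle; linarith
    · rw [show ({0,1,2,3} : Finset (Fin 4)).erase 1 = {0,2,3} from by decide] at hcv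
      exact nc023 hcv
    · rw [show ({0,1,2,3} : Finset (Fin 4)).erase 2 = {0,1,3} from by decide] at hcv
      exact nc013 hcv
    · rw [show ({0,1,2,3} : Finset (Fin 4)).erase 3 = {0,1,2} from by decide,
        habc, h0] at hle; linarith

/-- EF1 fails for the split ({0}, {1,2,3}). -/
lemma ef1fail_a (u : Finset (Fin 4) → ℝ)
    (ha : u {0} = 2) (hbc : u {1,2} = 3) (hcd : u {2,3} = 3) (hbcd : u {1,2,3} = 4)
    (h : u ({1,2,3} : Finset (Fin 4)) ≤ u {0} ∨
      ∃ v ∈ ({1,2,3} : Finset (Fin 4)),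
        ConnSet (SimpleGraph.pathGraph 4) (({1,2,3} : Finset (Fin 4)).erase v) ∧
        u (({1,2,3} : Finset (Fin 4)).erase v) ≤ u {0}) : False := by
  rcases h with h | ⟨v, hv, hcv, hle⟩
  · rw [hbcd, ha] at h; linarith
  · fin_cases hv
    · rw [show ({1,2,3} : Finset (Fin 4)).erase 1 = {2,3} from by decide,
        hcd, ha] at hle; linarith
    · rw [show ({1,2,3} : Finset (Fin 4)).erase 2 = {1,3} from by decide] at hcv
      exact nc13 hcv
    · rw [show ({1,2,3} : Finset (Fin 4)).erase 3 = {1,2} from by decide,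
        hbc, ha] at hle; linarith

/-- EF1 fails for the split ({0,1,2}, {3}). -/
lemma ef1fail_d (u : Finset (Fin 4) → ℝ)
    (hd : u {3} = 1) (hab : u {0,1} = 2) (hbc : u {1,2} = 3) (habc : u {0,1,2} = 3)
    (h : u ({0,1,2} : Finset (Fin 4)) ≤ u {3} ∨
      ∃ v ∈ ({0,1,2} : Finset (Fin 4)),
        ConnSet (SimpleGraph.pathGraph 4) (({0,1,2} : Finset (Fin 4)).erase v) ∧
        u (({0,1,2} : Finset (Fin 4)).erase v) ≤ u {3}) : False := by
  rcases h with h | ⟨v, hv, hcv, hle⟩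
  · rw [habc, hd] at h; linarith
  · fin_cases hv
    · rw [show ({0,1,2} : Finset (Fin 4)).erase 0 = {1,2} from by decide,
        hbc, hd] at hle; linarith
    · rw [show ({0,1,2} : Finset (Fin 4)).erase 1 = {0,2} from by decide] at hcv
      exact nc02 hcv
    · rw [show ({0,1,2} : Finset (Fin 4)).erase 2 = {0,1} from by decide,
        hab, hd] at hle; linarith

/-- On the path `(a,b,c,d)` (encoded as `0,1,2,3 : Fin 4`) with
two agents having the identical non-additive valuation `u` below, no connected
allocation is both Pareto-optimal and EF1. -/
theorem stmt13 (u : Finset (Fin 4) → ℝ)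
    (h0 : u ∅ = 0) (ha : u {0} = 2) (hb : u {1} = 2) (hc : u {2} = 2)
    (hd : u {3} = 1) (hab : u {0,1} = 2) (hbc : u {1,2} = 3) (hcd : u {2,3} = 3)
    (habc : u {0,1,2} = 3) (hbcd : u {1,2,3} = 4) (habcd : u {0,1,2,3} = 4)
    (π : Fin 2 → Finset (Fin 4))
    (hπ : IsConnAlloc (SimpleGraph.pathGraph 4) π) :
    ¬ (ParetoOptimal (SimpleGraph.pathGraph 4) (fun _ => u) π ∧
       EF1 (SimpleGraph.pathGraph 4) (fun _ => u) π) := by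
  rintro ⟨hPO, hEF1⟩
  obtain ⟨-, hconn, hdisj, hcov⟩ := hπ
  -- π 1 is the complement of π 0
  have hcomp : π 1 = (π 0)ᶜ := by
    ext v
    simp only [Finset.mem_compl]
    constructor
    · intro h1 h0'
      exact (Finset.disjoint_left.mp (hdisj 0 1 (by decide)) h0') h1
    · intro h0'
      obtain ⟨i, hi⟩ := hcov v (Finset.mem_univ v)
      fin_cases i
      · exact absurd hi h0'
      · exact hi
  have hcases : ∀ S : Finset (Fin 4), S = ∅ ∨ S = {0} ∨ S = {1} ∨ S = {2} ∨
      S = {3} ∨ S = {0,1} ∨ S = {0,2} ∨ S = {0,3} ∨ S = {1,2} ∨ S = {1,3} ∨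
      S = {2,3} ∨ S = {0,1,2} ∨ S = {0,1,3} ∨ S = {0,2,3} ∨ S = {1,2,3} ∨
      S = {0,1,2,3} := by decide
  have hc0 := hconn 0
  have hc1 := hconn 1
  rcases hcases (π 0) with h|h|h|h|h|h|h|h|h|h|h|h|h|h|h|h
  all_goals rw [h] at hc0 hcomp
  all_goals rw [hcomp] at hc1
  -- case π 0 = ∅ : π 1 = univ, EF1 fails (agent 0 envies agent 1)
  · have := hEF1 0 1
    rw [h, hcomp] at this
    rw [show (∅ : Finset (Fin 4))ᶜ = {0,1,2,3} from by decide] at this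
    exact ef1fail_full u h0 habc hbcd habcd this
  -- π 0 = {0} : π 1 = {1,2,3}, EF1 fails
  · have := hEF1 0 1
    rw [h, hcomp] at this
    rw [show ({0} : Finset (Fin 4))ᶜ = {1,2,3} from by decide] at this
    exact ef1fail_a u ha hbc hcd hbcd this
  -- π 0 = {1} : complement {0,2,3} disconnected
  · rw [show ({1} : Finset (Fin 4))ᶜ = {0,2,3} from by decide] at hc1
    exact nc023 hc1
  -- π 0 = {2} : complement {0,1,3} disconnected
  · rw [show ({2} : Finset (Fin 4))ᶜ = {0,1,3} from by decide] at hc1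
    exact nc013 hc1
  -- π 0 = {3} : π 1 = {0,1,2}, EF1 fails
  · have := hEF1 0 1
    rw [h, hcomp] at this
    rw [show ({3} : Finset (Fin 4))ᶜ = {0,1,2} from by decide] at this
    exact ef1fail_d u hd hab hbc habc this
  -- π 0 = {0,1} : π 1 = {2,3}, not Pareto-optimal via ({0},{1,2,3})
  · refine hPO _ alloc1 ⟨fun i => ?_, 1, ?_⟩
    · fin_cases i
      · show u (π 0) ≤ u {0}
        rw [h, hab, ha]
      · show u (π 1) ≤ u {1,2,3}
        rw [hcomp, show ({0,1} : Finset (Fin 4))ᶜ = {2,3} from by decide, hcd, hbcd]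
        linarith
    · show u (π 1) < u {1,2,3}
      rw [hcomp, show ({0,1} : Finset (Fin 4))ᶜ = {2,3} from by decide, hcd, hbcd]
      linarith
  -- π 0 = {0,2} : disconnected
  · exact nc02 hc0
  -- π 0 = {0,3} : disconnected
  · exact nc03 hc0
  -- π 0 = {1,2} : complement {0,3} disconnected
  · rw [show ({1,2} : Finset (Fin 4))ᶜ = {0,3} from by decide] at hc1
    exact nc03 hc1
  -- π 0 = {1,3} : disconnected
  · exact nc13 hc0
  -- π 0 = {2,3} : π 1 = {0,1}, not Pareto-optimal via ({1,2,3},{0})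
  · refine hPO _ alloc2 ⟨fun i => ?_, 0, ?_⟩
    · fin_cases i
      · show u (π 0) ≤ u {1,2,3}
        rw [h, hcd, hbcd]
        linarith
      · show u (π 1) ≤ u {0}
        rw [hcomp, show ({2,3} : Finset (Fin 4))ᶜ = {0,1} from by decide, hab, ha]
    · show u (π 0) < u {1,2,3}
      rw [h, hcd, hbcd]
      linarith
  -- π 0 = {0,1,2} : π 1 = {3}, EF1 fails (agent 1 envies agent 0)
  · have := hEF1 1 0
    rw [h, hcomp] at this
    rw [show ({0,1,2} : Finset (Fin 4))ᶜ = {3} from by decide] at this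
    exact ef1fail_d u hd hab hbc habc this
  -- π 0 = {0,1,3} : disconnected
  · exact nc013 hc0
  -- π 0 = {0,2,3} : disconnected
  · exact nc023 hc0
  -- π 0 = {1,2,3} : π 1 = {0}, EF1 fails
  · have := hEF1 1 0
    rw [h, hcomp] at this
    rw [show ({1,2,3} : Finset (Fin 4))ᶜ = {0} from by decide] at this
    exact ef1fail_a u ha hbc hcd hbcd this
  -- π 0 = {0,1,2,3} : π 1 = ∅, EF1 fails
  · have := hEF1 1 0
    rw [h, hcomp] at this
    rw [show ({0,1,2,3} : Finset (Fin 4))ᶜ = ∅ from by decide] at this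
    exact ef1fail_full u h0 habc hbcd habcd this
end

section
/- Suppose G is the path P = (1,2,…,m), all agents have binary additive valuations, and let i, j ∈ N be a pair of distinct agents such that the approval sets A(i) and A(j) are nonempty and connected on the path, min A(i) ≤ min A(j), and max A(i) ≤ max A(j). If for some x ∈ {1,…,m} agent j values the prefix [1,x] = {1,…,x} at least as highly as her maximin fair share (u_j([1,x]) ≥ mms_j) and min A(j) ≤ x+1, then agent i values [1,x] at least as highly as her maximin fair share (u_i([1,x]) ≥ mms_i). -/
open Finset

lemma walk_mem_aux {m : ℕ} {X : Finset (Fin m)} {a b : (X : Set (Fin m))}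
    (p : ((SimpleGraph.pathGraph m).induce (X : Set (Fin m))).Walk a b) :
    ∀ c : Fin m, (a : Fin m) ≤ c → c ≤ (b : Fin m) → c ∈ X := by
  induction p with
  | nil =>
    rename_i u
    intro c h1 h2
    have : (u : Fin m) = c := le_antisymm h1 h2
    exact Finset.mem_coe.mp (this ▸ u.2)
  | @cons u v w h p ih =>
    intro c h1 h2
    by_cases hc : (u : Fin m) = c
    · exact Finset.mem_coe.mp (hc ▸ u.2)
    · have hadj : (SimpleGraph.pathGraph m).Adj (u : Fin m) (v : Fin m) := h
      rw [SimpleGraph.pathGraph_adj] at hadj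
      have hlt : (u : Fin m) < c := lt_of_le_of_ne h1 hc
      apply ih c _ h2
      rw [Fin.le_def]
      rw [Fin.lt_def] at hlt
      omega

lemma conn_interval {m : ℕ} {X : Finset (Fin m)}
    (hX : ConnSet (SimpleGraph.pathGraph m) X)
    {a b c : Fin m} (ha : a ∈ X) (hb : b ∈ X) (hac : a ≤ c) (hcb : c ≤ b) :
    c ∈ X := by
  obtain ⟨p⟩ := hX ⟨a, Finset.mem_coe.mpr ha⟩ ⟨b, Finset.mem_coe.mpr hb⟩
  exact walk_mem_aux p c hac hcb

lemma interval_eq {m : ℕ} {X : Finset (Fin m)}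
    (hX : ConnSet (SimpleGraph.pathGraph m) X) (hne : X.Nonempty) :
    X = Finset.Icc (X.min' hne) (X.max' hne) := by
  ext v
  simp only [Finset.mem_Icc]
  constructor
  · exact fun hv => ⟨X.min'_le v hv, X.le_max' v hv⟩
  · rintro ⟨h1, h2⟩
    exact conn_interval hX (X.min'_mem hne) (X.max'_mem hne) h1 h2

lemma prefix_inter_card {m : ℕ} {a b x : Fin m} (hxb : x ≤ b) :
    (Finset.Iic x ∩ Finset.Icc a b).card = x.val + 1 - a.val := by
  have heq : Finset.Iic x ∩ Finset.Icc a b = Finset.Icc a x := by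
    rw [Fin.le_def] at hxb
    ext v
    simp only [Finset.mem_inter, Finset.mem_Iic, Finset.mem_Icc, Fin.le_def]
    omega
  rw [heq, Fin.card_Icc]

/-- On the path `(1,…,m)` (encoded as `Fin m`) with binary
additive valuations given by approval sets `A`, if `A i` and `A j` are
nonempty intervals with `min A(i) ≤ min A(j)` and `max A(i) ≤ max A(j)`, and
agent `j` values the prefix `[1,x]` at least as highly as her maximin fair
share while `min A(j) ≤ x+1`, then agent `i` values `[1,x]` at least as highly
as her maximin fair share. -/
theorem stmt16 {m : ℕ} {N : Type*} [Fintype N]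
    (A : N → Finset (Fin m))
    (u : N → Finset (Fin m) → ℝ)
    (hu : ∀ i X, u i X = ((X ∩ A i).card : ℝ))
    (i j : N) (hij : i ≠ j)
    (hAi : (A i).Nonempty) (hAj : (A j).Nonempty)
    (hci : ConnSet (SimpleGraph.pathGraph m) (A i))
    (hcj : ConnSet (SimpleGraph.pathGraph m) (A j))
    (hmin : (A i).min' hAi ≤ (A j).min' hAj)
    (hmax : (A i).max' hAi ≤ (A j).max' hAj)
    (x : Fin m)
    (hjx : mmsVal N (SimpleGraph.pathGraph m) (u j) ≤
      u j (Finset.univ.filter (· ≤ x)))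
    (hminj : ((A j).min' hAj : ℕ) ≤ (x : ℕ) + 1) :
    mmsVal N (SimpleGraph.pathGraph m) (u i) ≤
      u i (Finset.univ.filter (· ≤ x)) := by
  classical
  have hneN : Nonempty N := ⟨i⟩
  have hAieq : A i = Finset.Icc ((A i).min' hAi) ((A i).max' hAi) :=
    interval_eq hci hAi
  have hAjeq : A j = Finset.Icc ((A j).min' hAj) ((A j).max' hAj) :=
    interval_eq hcj hAj
  have hprefix : (Finset.univ.filter (· ≤ x)) = Finset.Iic x := by
    ext v; simp
  rw [hprefix] at hjx ⊢
  rw [hu] at hjx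
  rw [hu]
  unfold mmsVal
  apply Real.sSup_le _ (Nat.cast_nonneg _)
  rintro y ⟨P, hP, rfl⟩
  have key : ∃ k, u i (P k) ≤ (((Finset.Iic x ∩ A i).card : ℕ) : ℝ) := by
    by_cases hxbi : (A i).max' hAi ≤ x
    · refine ⟨i, ?_⟩
      rw [hu]
      have hsub : A i ⊆ Finset.Iic x := fun v hv =>
        Finset.mem_Iic.mpr (le_trans (Finset.le_max' _ v hv) hxbi)
      have hcard : (P i ∩ A i).card ≤ (Finset.Iic x ∩ A i).card := by
        apply Finset.card_le_card
        intro v hv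
        simp only [Finset.mem_inter] at hv ⊢
        exact ⟨hsub hv.2, hv.2⟩
      exact_mod_cast hcard
    · by_contra hcon
      push_neg at hcon
      have hbig : ∀ k, (Finset.Iic x ∩ A i).card + 1 ≤ (P k ∩ A i).card := by
        intro k
        have h := hcon k
        rw [hu] at h
        exact_mod_cast h
      have hxbi' : x < (A i).max' hAi := not_le.mp hxbi
      have hxbiv : x.val < ((A i).max' hAi).val := hxbi'
      have hbibj : ((A i).max' hAi).val ≤ ((A j).max' hAj).val := hmax
      have haiaj : ((A i).min' hAi).val ≤ ((A j).min' hAj).val := hmin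
      have hx1m : x.val + 1 < m := lt_of_le_of_lt hxbiv ((A i).max' hAi).isLt
      obtain ⟨x1, hx1v⟩ : ∃ x1 : Fin m, x1.val = x.val + 1 := ⟨⟨x.val + 1, hx1m⟩, rfl⟩
      have hm0 : 0 < m := by omega
      obtain ⟨z0, hz0v⟩ : ∃ z0 : Fin m, z0.val = 0 := ⟨⟨0, hm0⟩, rfl⟩
      obtain ⟨k0, hk0⟩ := hP.2.2.2 z0 (Finset.mem_univ _)
      have hex : ∃ v ∈ P k0 ∩ A i, x < v := by
        by_contra hno
        push_neg at hno
        have hsub : P k0 ∩ A i ⊆ Finset.Iic x ∩ A i := by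
          intro v hv
          rw [Finset.mem_inter] at hv
          rw [Finset.mem_inter, Finset.mem_Iic]
          exact ⟨hno v (Finset.mem_inter.mpr hv), hv.2⟩
        have h1 := Finset.card_le_card hsub
        have h2 := hbig k0
        omega
      obtain ⟨v, hv, hxv⟩ := hex
      rw [Finset.mem_inter] at hv
      have hx1v' : x1 ≤ v := by
        rw [Fin.le_def]
        have : x.val < v.val := hxv
        omega
      have hIic1 : ∀ c : Fin m, c ≤ x1 → c ∈ P k0 := by
        intro c hc
        exact conn_interval (hP.2.1 k0) hk0 hv.1
          (by rw [Fin.le_def]; omega) (le_trans hc hx1v')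
      have htval : (Finset.Iic x ∩ A i).card = x.val + 1 - ((A i).min' hAi).val := by
        conv_lhs => rw [hAieq]
        exact prefix_inter_card (le_of_lt hxbi')
      have hsval : (Finset.Iic x ∩ A j).card = x.val + 1 - ((A j).min' hAj).val := by
        conv_lhs => rw [hAjeq]
        exact prefix_inter_card (by rw [Fin.le_def]; omega)
      have claim : ∀ k, (Finset.Iic x ∩ A j).card + 1 ≤ (P k ∩ A j).card := by
        intro k
        by_cases hkk : k = k0
        · subst hkk
          have hsub : Finset.Icc ((A j).min' hAj) x1 ⊆ P k ∩ A j := by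
            intro c hc
            rw [Finset.mem_Icc] at hc
            rw [Finset.mem_inter]
            refine ⟨hIic1 c hc.2, ?_⟩
            rw [hAjeq, Finset.mem_Icc]
            refine ⟨hc.1, le_trans hc.2 ?_⟩
            rw [Fin.le_def]
            omega
          have h1 := Finset.card_le_card hsub
          rw [Fin.card_Icc] at h1
          omega
        · have hsub : P k ∩ A i ⊆ P k ∩ A j := by
            intro w hw
            rw [Finset.mem_inter] at hw ⊢
            refine ⟨hw.1, ?_⟩
            have hwn : w ∉ P k0 := Finset.disjoint_left.mp (hP.2.2.1 k k0 hkk) hw.1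
            have hx1w : x1 < w := by
              by_contra hle
              push_neg at hle
              exact hwn (hIic1 w hle)
            have hx1wv : x1.val < w.val := hx1w
            rw [hAjeq, Finset.mem_Icc]
            constructor
            · rw [Fin.le_def]; omega
            · rw [hAieq, Finset.mem_Icc] at hw
              exact le_trans hw.2.2 hmax
          have h1 := Finset.card_le_card hsub
          have h2 := hbig k
          omega
      have hbddj : BddAbove {y : ℝ | ∃ P' : N → Finset (Fin m),
          IsConnAlloc (SimpleGraph.pathGraph m) P' ∧
          y = sInf (Set.range fun k => u j (P' k))} := by
        refine ⟨(m : ℝ), ?_⟩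
        rintro y ⟨P', hP', rfl⟩
        refine le_trans (csInf_le (Set.finite_range _).bddBelow ⟨j, rfl⟩) ?_
        show u j (P' j) ≤ (m : ℝ)
        rw [hu]
        have hc1 : (P' j ∩ A j).card ≤ m := by
          have := Finset.card_le_univ (P' j ∩ A j)
          simpa using this
        exact_mod_cast hc1
      have h1 : (((Finset.Iic x ∩ A j).card : ℝ) + 1) ≤
          sInf (Set.range fun k => u j (P k)) := by
        apply le_csInf (Set.range_nonempty _)
        rintro z ⟨k, rfl⟩
        show _ ≤ u j (P k)
        rw [hu]
        have hck := claim k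
        have : (((Finset.Iic x ∩ A j).card + 1 : ℕ) : ℝ) ≤ ((P k ∩ A j).card : ℝ) := by
          exact_mod_cast hck
        push_cast at this
        linarith
      have h2 : (((Finset.Iic x ∩ A j).card : ℝ) + 1) ≤
          mmsVal N (SimpleGraph.pathGraph m) (u j) := by
        unfold mmsVal
        exact le_trans h1 (le_csSup hbddj ⟨P, hP, rfl⟩)
      linarith
  obtain ⟨k, hk⟩ := key
  exact le_trans (csInf_le (Set.finite_range _).bddBelow ⟨k, rfl⟩) hk
end
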